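/- arXiv:1103.3644 — 15 statements merged into one kernel-verified Lean document; each statement's English description precedes it below -/
import Mathlib

section
/- Let S₁ and S₂ be finite sets and let μ₁ and μ₂ be probability measures on the finite spaces of functions S₁ → Bool and S₂ → Bool respectively. If the pushforward of μ₁ under restriction to S₁ ∩ S₂ equals the pushforward of μ₂ under restriction to S₁ ∩ S₂, then there exists a probability measure μ on the space of functions (S₁ ∪ S₂) → Bool whose pushforward under restriction to S₁ is μ₁ and whose pushforward under restriction to S₂ is μ₂. -/
open MeasureTheory

/-- Restriction of a Boolean configuration on a finite set `T` to a subset `S ⊆ T`. -/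
def restrictConfig {α : Type*} {S T : Finset α} (hST : S ⊆ T) (f : ↥T → Bool) (x : ↥S) : Bool :=
  f ⟨x.1, hST x.2⟩

theorem stmt_0 {α : Type*} [DecidableEq α] (S₁ S₂ : Finset α)
    (μ₁ : Measure (↥S₁ → Bool)) (μ₂ : Measure (↥S₂ → Bool))
    [IsProbabilityMeasure μ₁] [IsProbabilityMeasure μ₂]
    (h : μ₁.map (restrictConfig (Finset.inter_subset_left)) =
         μ₂.map (restrictConfig (Finset.inter_subset_right))) :
    ∃ μ : Measure (↥(S₁ ∪ S₂) → Bool), IsProbabilityMeasure μ ∧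
      μ.map (restrictConfig (Finset.subset_union_left)) = μ₁ ∧
      μ.map (restrictConfig (Finset.subset_union_right)) = μ₂ := by
  classical
  set q₁ : (↥S₁ → Bool) → (↥(S₁ ∩ S₂) → Bool) :=
    restrictConfig Finset.inter_subset_left with hq₁def
  set q₂ : (↥S₂ → Bool) → (↥(S₁ ∩ S₂) → Bool) :=
    restrictConfig Finset.inter_subset_right with hq₂def
  set r₁ : (↥(S₁ ∪ S₂) → Bool) → (↥S₁ → Bool) :=
    restrictConfig Finset.subset_union_left with hr₁def
  set r₂ : (↥(S₁ ∪ S₂) → Bool) → (↥S₂ → Bool) :=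
    restrictConfig Finset.subset_union_right with hr₂def
  set ν : Measure (↥(S₁ ∩ S₂) → Bool) := μ₁.map q₁ with hνdef
  have hνprob : IsProbabilityMeasure ν :=
    Measure.isProbabilityMeasure_map (measurable_of_finite q₁).aemeasurable
  -- basic bounds: singletons are dominated by the marginal of the intersection
  have h1 : ∀ f₁ : ↥S₁ → Bool, μ₁ {f₁} ≤ ν {q₁ f₁} := by
    intro f₁
    rw [hνdef, Measure.map_apply (measurable_of_finite q₁) (measurableSet_singleton _)]
    exact measure_mono (Set.singleton_subset_iff.mpr rfl)
  have h2 : ∀ f₂ : ↥S₂ → Bool, μ₂ {f₂} ≤ ν {q₂ f₂} := by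
    intro f₂
    rw [h, Measure.map_apply (measurable_of_finite q₂) (measurableSet_singleton _)]
    exact measure_mono (Set.singleton_subset_iff.mpr rfl)
  -- gluing map
  set glue : (↥S₁ → Bool) → (↥S₂ → Bool) → (↥(S₁ ∪ S₂) → Bool) := fun f₁ f₂ x =>
    if hx : x.1 ∈ S₁ then f₁ ⟨x.1, hx⟩
    else f₂ ⟨x.1, (Finset.mem_union.mp x.2).resolve_left hx⟩ with hgluedef
  have hr₁glue : ∀ f₁ f₂, r₁ (glue f₁ f₂) = f₁ := by
    intro f₁ f₂; funext x
    simp only [hr₁def, hgluedef, restrictConfig, x.2, dif_pos]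
  have hr₂glue : ∀ (f₁ : ↥S₁ → Bool) (f₂ : ↥S₂ → Bool), q₂ f₂ = q₁ f₁ →
      r₂ (glue f₁ f₂) = f₂ := by
    intro f₁ f₂ hcomp; funext x
    by_cases hx : x.1 ∈ S₁
    · have := congrFun hcomp ⟨x.1, Finset.mem_inter.mpr ⟨hx, x.2⟩⟩
      simp only [hq₁def, hq₂def, restrictConfig] at this
      simp only [hr₂def, hgluedef, restrictConfig, dif_pos hx]
      exact this.symm
    · simp only [hr₂def, hgluedef, restrictConfig, dif_neg hx]
  have hglue₃ : ∀ g, glue (r₁ g) (r₂ g) = g := by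
    intro g; funext x
    by_cases hx : x.1 ∈ S₁
    · simp only [hgluedef, hr₁def, restrictConfig, dif_pos hx]
    · simp only [hgluedef, hr₂def, restrictConfig, dif_neg hx]
  have hqq : ∀ g, q₂ (r₂ g) = q₁ (r₁ g) := fun g => rfl
  -- the measure on a finite set is the sum of its singletons
  have hmeas_sum : ∀ {β : Type _} [MeasurableSpace β] [MeasurableSingletonClass β]
      [Fintype β] (μ : Measure β) (s : Finset β), μ ↑s = ∑ b ∈ s, μ {b} := by
    intro β _ _ _ μ s
    have := MeasureTheory.sum_measure_preimage_singleton (μ := μ) s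
      (f := id) (fun y _ => measurableSet_singleton y)
    simpa using this.symm
  -- key summation identities
  have key₁ : ∀ f₁ : ↥S₁ → Bool,
      (∑ g : ↥(S₁ ∪ S₂) → Bool, if r₁ g = f₁ then μ₂ {r₂ g} else 0) = ν {q₁ f₁} := by
    intro f₁
    rw [← Finset.sum_filter]
    rw [Finset.sum_nbij' (i := fun g => r₂ g) (j := fun f₂ => glue f₁ f₂)
      (t := Finset.univ.filter fun f₂ => q₂ f₂ = q₁ f₁) (g := fun f₂ => μ₂ {f₂})]
    · have : ν {q₁ f₁} = μ₂ (q₂ ⁻¹' {q₁ f₁}) := by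
        rw [h, Measure.map_apply (measurable_of_finite q₂) (measurableSet_singleton _)]
      rw [this]
      have hset : (q₂ ⁻¹' {q₁ f₁}) = ↑(Finset.univ.filter fun f₂ => q₂ f₂ = q₁ f₁) := by
        ext f₂; simp
      rw [hset, hmeas_sum]
    · intro g hg
      simp only [Finset.mem_filter, Finset.mem_univ, true_and] at hg ⊢
      rw [hqq g, hg]
    · intro f₂ hf₂
      simp only [Finset.mem_filter, Finset.mem_univ, true_and] at hf₂ ⊢
      rw [hr₁glue]
    · intro g hg
      simp only [Finset.mem_filter, Finset.mem_univ, true_and] at hg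
      rw [← hg, hglue₃]
    · intro f₂ hf₂
      simp only [Finset.mem_filter, Finset.mem_univ, true_and] at hf₂
      exact hr₂glue f₁ f₂ hf₂
    · intro g hg; rfl
  have key₂ : ∀ f₂ : ↥S₂ → Bool,
      (∑ g : ↥(S₁ ∪ S₂) → Bool, if r₂ g = f₂ then μ₁ {r₁ g} else 0) = ν {q₂ f₂} := by
    intro f₂
    rw [← Finset.sum_filter]
    rw [Finset.sum_nbij' (i := fun g => r₁ g) (j := fun f₁ => glue f₁ f₂)
      (t := Finset.univ.filter fun f₁ => q₁ f₁ = q₂ f₂) (g := fun f₁ => μ₁ {f₁})]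
    · have : ν {q₂ f₂} = μ₁ (q₁ ⁻¹' {q₂ f₂}) := by
        rw [hνdef, Measure.map_apply (measurable_of_finite q₁) (measurableSet_singleton _)]
      rw [this]
      have hset : (q₁ ⁻¹' {q₂ f₂}) = ↑(Finset.univ.filter fun f₁ => q₁ f₁ = q₂ f₂) := by
        ext f₁; simp
      rw [hset, hmeas_sum]
    · intro g hg
      simp only [Finset.mem_filter, Finset.mem_univ, true_and] at hg ⊢
      rw [← hqq g, hg]
    · intro f₁ hf₁
      simp only [Finset.mem_filter, Finset.mem_univ, true_and] at hf₁ ⊢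
      exact hr₂glue f₁ f₂ hf₁.symm
    · intro g hg
      simp only [Finset.mem_filter, Finset.mem_univ, true_and] at hg
      rw [← hg, hglue₃]
    · intro f₁ hf₁; exact hr₁glue f₁ f₂
    · intro g hg; rfl
  -- the glued measure
  set w : (↥(S₁ ∪ S₂) → Bool) → ENNReal :=
    fun g => μ₁ {r₁ g} * μ₂ {r₂ g} * (ν {q₁ (r₁ g)})⁻¹ with hwdef
  set μ : Measure (↥(S₁ ∪ S₂) → Bool) :=
    ∑ g : ↥(S₁ ∪ S₂) → Bool, w g • Measure.dirac g with hμdef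
  have happly : ∀ s : Set (↥(S₁ ∪ S₂) → Bool),
      μ s = ∑ g : ↥(S₁ ∪ S₂) → Bool, w g * s.indicator 1 g := by
    intro s
    rw [hμdef, Measure.finset_sum_apply]
    congr 1; funext g
    rw [Measure.smul_apply, Measure.dirac_apply, smul_eq_mul]
  -- the marginals
  have hm₁ : μ.map r₁ = μ₁ := by
    rw [Measure.ext_iff_singleton]
    intro f₁
    rw [Measure.map_apply (measurable_of_finite r₁) (measurableSet_singleton _), happly]
    have step : ∀ g : ↥(S₁ ∪ S₂) → Bool, w g * (r₁ ⁻¹' {f₁}).indicator 1 g =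
        (μ₁ {f₁} * (ν {q₁ f₁})⁻¹) * (if r₁ g = f₁ then μ₂ {r₂ g} else 0) := by
      intro g
      by_cases hg : r₁ g = f₁
      · simp only [Set.indicator_apply, Set.mem_preimage, Set.mem_singleton_iff, hg, if_pos,
          Pi.one_apply, mul_one, hwdef]
        ring
      · simp only [Set.indicator_apply, Set.mem_preimage, Set.mem_singleton_iff, hg, if_neg,
          if_false, mul_zero, not_false_iff]
    rw [Finset.sum_congr rfl fun g _ => step g, ← Finset.mul_sum, key₁]
    by_cases h0 : ν {q₁ f₁} = 0
    · rw [h0, mul_zero]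
      exact (le_zero_iff.mp ((h1 f₁).trans h0.le)).symm
    · rw [mul_assoc, ENNReal.inv_mul_cancel h0 (measure_ne_top ν _), mul_one]
  have hm₂ : μ.map r₂ = μ₂ := by
    rw [Measure.ext_iff_singleton]
    intro f₂
    rw [Measure.map_apply (measurable_of_finite r₂) (measurableSet_singleton _), happly]
    have step : ∀ g : ↥(S₁ ∪ S₂) → Bool, w g * (r₂ ⁻¹' {f₂}).indicator 1 g =
        (μ₂ {f₂} * (ν {q₂ f₂})⁻¹) * (if r₂ g = f₂ then μ₁ {r₁ g} else 0) := by
      intro g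
      by_cases hg : r₂ g = f₂
      · simp only [Set.indicator_apply, Set.mem_preimage, Set.mem_singleton_iff, hg, if_pos,
          Pi.one_apply, mul_one, hwdef]
        rw [← hqq g, hg]
        ring
      · simp only [Set.indicator_apply, Set.mem_preimage, Set.mem_singleton_iff, hg, if_neg,
          if_false, mul_zero, not_false_iff]
    rw [Finset.sum_congr rfl fun g _ => step g, ← Finset.mul_sum, key₂]
    by_cases h0 : ν {q₂ f₂} = 0
    · rw [h0, mul_zero]
      exact (le_zero_iff.mp ((h2 f₂).trans h0.le)).symm
    · rw [mul_assoc, ENNReal.inv_mul_cancel h0 (measure_ne_top ν _), mul_one]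
  have hprob : IsProbabilityMeasure μ := by
    constructor
    have hu : (Measure.map r₁ μ) Set.univ = μ₁ Set.univ := by rw [hm₁]
    rw [Measure.map_apply (measurable_of_finite r₁) MeasurableSet.univ,
      Set.preimage_univ] at hu
    simpa using hu
  exact ⟨μ, hprob, hm₁, hm₂⟩
end

section
/- Let T be a finite simple graph on a vertex set V that is a tree (connected and acyclic). Suppose given numbers p : V → ℝ with 0 ≤ p i ≤ 1 for all i, and numbers q assigned to each edge {i,j} of T with max(0, p i + p j − 1) ≤ q {i,j} ≤ min(p i, p j). Then there exists a probability measure μ on the space of functions V → Bool such that for every vertex i, μ({f | f i = true}) = p i, and for every edge {i,j} of T, μ({f | f i = true ∧ f j = true}) = q {i,j}. -/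
/-!
Induction on the number of vertices. Remove a leaf `l` with neighbour `m` and realize the
remaining tree; then reattach `l`, drawing its value conditionally on the value at `m` alone
from the `2 × 2` table with marginals `p m`, `p l` and corner `q {m, l}`. The Fréchet bounds on
`q` say exactly that this table is nonnegative, and conditional independence given `m` keeps
all old one- and two-point marginals.
-/

open MeasureTheory Finset SimpleGraph

lemma exists_kernel_mul_eq {β γ : Type*} [Fintype γ] [Nonempty γ] (r : β → γ → ℝ)
    (hr : ∀ b c, 0 ≤ r b c) :
    ∃ κ : β → γ → ℝ, (∀ b, κ b ∈ stdSimplex ℝ γ) ∧ ∀ b c, (∑ c', r b c') * κ b c = r b c := by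
  classical
  refine ⟨fun b => if ∑ c, r b c = 0 then Pi.single (Classical.arbitrary γ) 1
    else fun c => r b c / ∑ c', r b c', fun b => ?_, fun b c => ?_⟩
  · dsimp only
    split_ifs with h
    · exact single_mem_stdSimplex ℝ _
    · refine ⟨fun c => div_nonneg (hr b c) (sum_nonneg fun c _ => hr b c), ?_⟩
      rw [← sum_div, div_self h]
  · dsimp only
    split_ifs with h
    · rw [h, zero_mul, eq_comm]
      exact (sum_eq_zero_iff_of_nonneg fun c _ => hr b c).1 h c (mem_univ c)
    · exact mul_div_cancel₀ _ h

/-- Gluing: a law `w'` on `W` and a joint law `r` of `(x, c)` agreeing with `w'` on `x` combine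
into a law on `γ × W` with both as marginals (`c` conditionally independent of `W` given `x`). -/
lemma exists_gluing {W β γ : Type*} [Fintype W] [Fintype β] [DecidableEq β] [Fintype γ]
    [Nonempty γ] {w' : W → ℝ} (hw' : w' ∈ stdSimplex ℝ W) (x : W → β) {r : β → γ → ℝ}
    (hr : ∀ b c, 0 ≤ r b c) (hx : ∀ b, ∑ g with x g = b, w' g = ∑ c, r b c) :
    ∃ w : γ × W → ℝ, w ∈ stdSimplex ℝ (γ × W) ∧
      (∀ (P : W → Prop) [DecidablePred P], ∑ y with P y.2, w y = ∑ g with P g, w' g) ∧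
      ∀ (Q : β → γ → Prop) [∀ b c, Decidable (Q b c)],
        ∑ y with Q (x y.2) y.1, w y = ∑ b, ∑ c, if Q b c then r b c else 0 := by
  obtain ⟨κ, hκ, hrκ⟩ := exists_kernel_mul_eq r hr
  have hmarg : ∀ (P : W → Prop) [DecidablePred P],
      ∑ y : γ × W with P y.2, w' y.2 * κ (x y.2) y.1 = ∑ g with P g, w' g := by
    intro P _
    rw [sum_filter, sum_filter, Fintype.sum_prod_type_right]
    refine sum_congr rfl fun g _ => ?_
    split_ifs
    · simp only [← mul_sum, (hκ _).2, mul_one]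
    · exact sum_const_zero
  refine ⟨fun y => w' y.2 * κ (x y.2) y.1, ⟨fun y => mul_nonneg (hw'.1 _) ((hκ _).1 _), ?_⟩,
    hmarg, fun Q _ => ?_⟩
  · simpa [hw'.2] using hmarg (fun _ => True)
  rw [sum_filter, Fintype.sum_prod_type_right, ← sum_fiberwise univ x]
  refine sum_congr rfl fun b _ => ?_
  calc ∑ g with x g = b, ∑ c, (if Q (x g) c then w' g * κ (x g) c else 0)
      = ∑ g with x g = b, ∑ c, (if Q b c then w' g * κ b c else 0) :=
        sum_congr rfl fun g hg => by rw [(mem_filter.1 hg).2]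
    _ = ∑ c, if Q b c then r b c else 0 := by
        rw [sum_comm]
        refine sum_congr rfl fun c _ => ?_
        split_ifs
        · rw [← sum_mul, hx, hrκ]
        · exact sum_const_zero

/-- The joint law of two Boolean variables `X, Y` with `P(X) = a`, `P(Y) = b`, `P(X ∧ Y) = c`. -/
def boolJoint (a b c : ℝ) : Bool → Bool → ℝ
  | true, true => c
  | true, false => a - c
  | false, true => b - c
  | false, false => 1 - a - b + c

lemma boolJoint_nonneg {a b c : ℝ} (h : max 0 (a + b - 1) ≤ c ∧ c ≤ min a b) (x y : Bool) :
    0 ≤ boolJoint a b c x y := by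
  obtain ⟨⟨h0, h1⟩, h2, h3⟩ : (0 ≤ c ∧ a + b - 1 ≤ c) ∧ c ≤ a ∧ c ≤ b := by
    simpa only [max_le_iff, le_min_iff] using h
  cases x <;> cases y <;> simp only [boolJoint] <;> linarith

lemma sum_boolJoint (a b c : ℝ) (x : Bool) :
    ∑ y, boolJoint a b c x y = if x then a else 1 - a := by
  cases x <;> simp [boolJoint]

lemma sum_filter_eq_ite_of_sum_eq_one {W : Type*} [Fintype W] {w : W → ℝ} (hw : ∑ g, w g = 1)
    {X : W → Bool} {a : ℝ} (ha : ∑ g with X g = true, w g = a) (x : Bool) :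
    ∑ g with X g = x, w g = if x then a else 1 - a := by
  cases x
  · have hsplit := sum_filter_add_sum_filter_not univ (fun g => X g = true) w
    simp only [Bool.not_eq_true] at hsplit
    simp only [Bool.false_eq_true, ↓reduceIte]
    linarith
  · simpa using ha

lemma SimpleGraph.IsTree.induce_compl_singleton_of_degree_eq_one {V : Type*} {T : SimpleGraph V}
    (hT : T.IsTree) {l : V} [Fintype (T.neighborSet l)] (hl : T.degree l = 1) :
    (T.induce {l}ᶜ).IsTree :=
  ⟨hT.connected.induce_compl_singleton_of_degree_eq_one hl, hT.isAcyclic.induce _⟩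

structure IsClassicalRepresentation {V : Type*} [Fintype V] [DecidableEq V] (T : SimpleGraph V)
    (p : V → ℝ) (q : Sym2 V → ℝ) (w : (V → Bool) → ℝ) : Prop where
  mem_stdSimplex : w ∈ stdSimplex ℝ (V → Bool)
  sum_vertex : ∀ i, ∑ f with f i = true, w f = p i
  sum_edge : ∀ i j, T.Adj i j → ∑ f with f i = true ∧ f j = true, w f = q s(i, j)

namespace IsClassicalRepresentation

variable {V : Type*} [Fintype V] [DecidableEq V] {T : SimpleGraph V} {p : V → ℝ} {q : Sym2 V → ℝ}

lemma extend_leaf {l m : V} (hlm : T.Adj l m) (hleaf : ∀ x, T.Adj l x → x = m)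
    {w' : (({l}ᶜ : Set V) → Bool) → ℝ}
    (hw' : IsClassicalRepresentation (T.induce {l}ᶜ) (fun i => p i) (fun e => q (e.map (↑))) w')
    (hq : max 0 (p m + p l - 1) ≤ q s(m, l) ∧ q s(m, l) ≤ min (p m) (p l)) :
    ∃ w, IsClassicalRepresentation T p q w := by
  have hml : m ≠ l := hlm.ne.symm
  set m' : ({l}ᶜ : Set V) := ⟨m, hml⟩
  have hx : ∀ b, ∑ g with g m' = b, w' g = ∑ c, boolJoint (p m) (p l) (q s(m, l)) b c := fun b => by
    rw [sum_filter_eq_ite_of_sum_eq_one hw'.mem_stdSimplex.2 (hw'.sum_vertex m'), sum_boolJoint]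
  obtain ⟨w₀, hw₀, hP, hQ⟩ := exists_gluing hw'.mem_stdSimplex (· m') (boolJoint_nonneg hq) hx
  set e : (V → Bool) ≃ Bool × (({l}ᶜ : Set V) → Bool) := Equiv.funSplitAt l Bool
  have hmass : ∀ (P : (V → Bool) → Prop) [DecidablePred P]
      (R : Bool × (({l}ᶜ : Set V) → Bool) → Prop) [DecidablePred R],
      (∀ f, P f ↔ R (e f)) → ∑ f with P f, w₀ (e f) = ∑ y with R y, w₀ y :=
    fun P _ R _ h => sum_equiv e (by simpa using h) (fun _ _ => rfl)
  have hml_edge : ∑ f with f m = true ∧ f l = true, w₀ (e f) = q s(m, l) := by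
    rw [hmass (fun f => f m = true ∧ f l = true) (fun y => y.2 m' = true ∧ y.1 = true)
      (fun f => Iff.rfl), hQ (fun b c => b = true ∧ c = true)]
    simp [boolJoint]
  refine ⟨w₀ ∘ e, ⟨?_, fun i => ?_, fun i j hij => ?_⟩⟩
  · exact ⟨fun f => hw₀.1 _, (e.sum_comp w₀).trans hw₀.2⟩
  · by_cases hi : i = l
    · subst hi
      rw [Function.comp_def, hmass (fun f => f i = true) (fun y => y.1 = true) (fun f => Iff.rfl),
        hQ (fun _ c => c = true)]
      simp [boolJoint]
    · rw [Function.comp_def, hmass (fun f => f i = true) (fun y => y.2 ⟨i, hi⟩ = true)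
        (fun f => Iff.rfl), hP (fun g => g ⟨i, hi⟩ = true)]
      exact hw'.sum_vertex ⟨i, hi⟩
  · rw [Function.comp_def]
    by_cases hi : i = l
    · subst hi
      obtain rfl := hleaf j hij
      rw [Sym2.eq_swap, ← hml_edge]
      exact sum_congr (filter_congr fun _ _ => and_comm) fun _ _ => rfl
    by_cases hj : j = l
    · subst hj
      obtain rfl := hleaf i hij.symm
      exact hml_edge
    rw [hmass (fun f => f i = true ∧ f j = true) (fun y => y.2 ⟨i, hi⟩ = true ∧ y.2 ⟨j, hj⟩ = true)
        (fun f => Iff.rfl), hP (fun g => g ⟨i, hi⟩ = true ∧ g ⟨j, hj⟩ = true)]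
    exact hw'.sum_edge ⟨i, hi⟩ ⟨j, hj⟩ hij

end IsClassicalRepresentation

lemma exists_isClassicalRepresentation_of_unique {V : Type*} [Fintype V] [DecidableEq V] [Unique V]
    (T : SimpleGraph V) {p : V → ℝ} (hp : 0 ≤ p default ∧ p default ≤ 1) (q : Sym2 V → ℝ) :
    ∃ w, IsClassicalRepresentation T p q w := by
  have hsum : ∀ F : (V → Bool) → ℝ, ∑ f, F f = F (fun _ => true) + F (fun _ => false) := fun F => by
    rw [← (Equiv.funUnique V Bool).symm.sum_comp, Fintype.sum_bool]; rfl
  refine ⟨fun f => if f default then p default else 1 - p default, ⟨⟨fun f => ?_, ?_⟩, fun i => ?_,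
    fun i j hij => (hij.ne (Subsingleton.elim i j)).elim⟩⟩
  · dsimp only
    split_ifs <;> linarith
  · simp [hsum]
  · simp [sum_filter, hsum, Unique.eq_default i]

theorem exists_isClassicalRepresentation_of_isTree {V : Type*} [Fintype V] [DecidableEq V]
    {T : SimpleGraph V} (hT : T.IsTree) {p : V → ℝ} (hp : ∀ i, 0 ≤ p i ∧ p i ≤ 1)
    {q : Sym2 V → ℝ} (hq : ∀ i j, T.Adj i j →
      max 0 (p i + p j - 1) ≤ q s(i, j) ∧ q s(i, j) ≤ min (p i) (p j)) :
    ∃ w, IsClassicalRepresentation T p q w := by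
  revert T p q
  refine Finite.induction_subsingleton_or_nontrivial (P := fun V => ∀ [Fintype V] [DecidableEq V]
    {T : SimpleGraph V}, T.IsTree → ∀ {p : V → ℝ}, (∀ i, 0 ≤ p i ∧ p i ≤ 1) → ∀ {q : Sym2 V → ℝ},
    (∀ i j, T.Adj i j → max 0 (p i + p j - 1) ≤ q s(i, j) ∧ q s(i, j) ≤ min (p i) (p j)) →
    ∃ w, IsClassicalRepresentation T p q w) V ?_ ?_
  · intro V _ _ _ _ T hT p hp q _
    have : Nonempty V := hT.connected.nonempty
    have : Unique V := uniqueOfSubsingleton (Classical.arbitrary V)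
    exact exists_isClassicalRepresentation_of_unique T (hp default) q
  · intro V _ _ ih _ _ T hT p hp q hq
    classical
    obtain ⟨l, hl⟩ := hT.exists_vert_degree_one_of_nontrivial
    obtain ⟨m, hlm, hleaf⟩ := degree_eq_one_iff_existsUnique_adj.1 hl
    obtain ⟨w', hw'⟩ := ih ({l}ᶜ : Set V) (Finite.card_subtype_lt (x := l) (by simp))
      (hT.induce_compl_singleton_of_degree_eq_one hl) (fun i => hp i)
      (q := fun e => q (e.map Subtype.val)) (fun i j hij => hq i j hij)
    exact IsClassicalRepresentation.extend_leaf hlm hleaf hw' (hq m l hlm.symm)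

lemma exists_isProbabilityMeasure_apply_eq_sum {α : Type*} [Fintype α] [MeasurableSpace α]
    [MeasurableSingletonClass α] {w : α → ℝ} (hw : w ∈ stdSimplex ℝ α) :
    ∃ μ : Measure α, IsProbabilityMeasure μ ∧
      ∀ (P : α → Prop) [DecidablePred P], μ {a | P a} = ENNReal.ofReal (∑ a with P a, w a) := by
  have hsum : ∑ a, ENNReal.ofReal (w a) = 1 := by
    rw [← ENNReal.ofReal_sum_of_nonneg fun a _ => hw.1 a, hw.2, ENNReal.ofReal_one]
  refine ⟨(PMF.ofFintype _ hsum).toMeasure, inferInstance, fun P _ => ?_⟩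
  rw [PMF.toMeasure_apply_fintype, ENNReal.ofReal_sum_of_nonneg fun a _ => hw.1 a, sum_filter]
  simp [Set.indicator_apply]

theorem stmt_1 {V : Type*} [Fintype V] (T : SimpleGraph V) (hT : T.IsTree)
    (p : V → ℝ) (hp : ∀ i, 0 ≤ p i ∧ p i ≤ 1) (q : Sym2 V → ℝ)
    (hq : ∀ i j, T.Adj i j →
      max 0 (p i + p j - 1) ≤ q s(i, j) ∧ q s(i, j) ≤ min (p i) (p j)) :
    ∃ μ : Measure (V → Bool), IsProbabilityMeasure μ ∧
      (∀ i, μ {f | f i = true} = ENNReal.ofReal (p i)) ∧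
      (∀ i j, T.Adj i j →
        μ {f | f i = true ∧ f j = true} = ENNReal.ofReal (q s(i, j))) := by
  classical
  obtain ⟨w, hw⟩ := exists_isClassicalRepresentation_of_isTree hT hp hq
  obtain ⟨μ, hμ, hμw⟩ := exists_isProbabilityMeasure_apply_eq_sum hw.mem_stdSimplex
  exact ⟨μ, hμ, fun i => by rw [hμw, hw.sum_vertex],
    fun i j hij => by rw [hμw, hw.sum_edge i j hij]⟩
end

section
/- Let A₁, A₂, B be random variables on a probability space, each taking values in {0,1} almost surely. Then E[A₁B] + E[A₂B] − E[B] ≤ E[A₁A₂] ≤ E[A₂] − E[A₂B] + E[A₁B]. -/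
open MeasureTheory

lemma int01 {Ω : Type*} [MeasurableSpace Ω] (μ : Measure Ω) [IsProbabilityMeasure μ]
    (f : Ω → ℝ) (mf : Measurable f) (hf : ∀ᵐ ω ∂μ, f ω = 0 ∨ f ω = 1) :
    Integrable f μ := by
  refine Integrable.mono' (integrable_const 1) mf.aestronglyMeasurable ?_
  filter_upwards [hf] with ω h
  rcases h with h | h <;> simp [h]

theorem stmt_3 {Ω : Type*} [MeasurableSpace Ω] (μ : Measure Ω) [IsProbabilityMeasure μ]
    (A₁ A₂ B : Ω → ℝ)
    (mA₁ : Measurable A₁) (mA₂ : Measurable A₂) (mB : Measurable B)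
    (hA₁ : ∀ᵐ ω ∂μ, A₁ ω = 0 ∨ A₁ ω = 1)
    (hA₂ : ∀ᵐ ω ∂μ, A₂ ω = 0 ∨ A₂ ω = 1)
    (hB : ∀ᵐ ω ∂μ, B ω = 0 ∨ B ω = 1) :
    (∫ ω, A₁ ω * B ω ∂μ) + (∫ ω, A₂ ω * B ω ∂μ) - (∫ ω, B ω ∂μ) ≤ ∫ ω, A₁ ω * A₂ ω ∂μ ∧
    (∫ ω, A₁ ω * A₂ ω ∂μ) ≤ (∫ ω, A₂ ω ∂μ) - (∫ ω, A₂ ω * B ω ∂μ) + (∫ ω, A₁ ω * B ω ∂μ) := by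
  have hA₁B : ∀ᵐ ω ∂μ, A₁ ω * B ω = 0 ∨ A₁ ω * B ω = 1 := by
    filter_upwards [hA₁, hB] with ω h1 h2
    rcases h1 with h1 | h1 <;> rcases h2 with h2 | h2 <;> simp [h1, h2]
  have hA₂B : ∀ᵐ ω ∂μ, A₂ ω * B ω = 0 ∨ A₂ ω * B ω = 1 := by
    filter_upwards [hA₂, hB] with ω h1 h2
    rcases h1 with h1 | h1 <;> rcases h2 with h2 | h2 <;> simp [h1, h2]
  have hA₁A₂ : ∀ᵐ ω ∂μ, A₁ ω * A₂ ω = 0 ∨ A₁ ω * A₂ ω = 1 := by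
    filter_upwards [hA₁, hA₂] with ω h1 h2
    rcases h1 with h1 | h1 <;> rcases h2 with h2 | h2 <;> simp [h1, h2]
  have iB : Integrable B μ := int01 μ B mB hB
  have iA₂ : Integrable A₂ μ := int01 μ A₂ mA₂ hA₂
  have iA₁B : Integrable (fun ω => A₁ ω * B ω) μ := int01 μ _ (mA₁.mul mB) hA₁B
  have iA₂B : Integrable (fun ω => A₂ ω * B ω) μ := int01 μ _ (mA₂.mul mB) hA₂B
  have iA₁A₂ : Integrable (fun ω => A₁ ω * A₂ ω) μ := int01 μ _ (mA₁.mul mA₂) hA₁A₂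
  constructor
  · have h : (∫ ω, (A₁ ω * B ω + A₂ ω * B ω - B ω) ∂μ) ≤ ∫ ω, A₁ ω * A₂ ω ∂μ := by
      have e1 : Integrable (fun ω => A₁ ω * B ω + A₂ ω * B ω) μ := iA₁B.add iA₂B
      refine integral_mono_ae (e1.sub iB) iA₁A₂ ?_
      filter_upwards [hA₁, hA₂, hB] with ω h1 h2 h3
      rcases h1 with h1 | h1 <;> rcases h2 with h2 | h2 <;> rcases h3 with h3 | h3 <;>
        simp [h1, h2, h3]
    have e1 : Integrable (fun ω => A₁ ω * B ω + A₂ ω * B ω) μ := iA₁B.add iA₂B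
    rwa [integral_sub e1 iB, integral_add iA₁B iA₂B] at h
  · have h : (∫ ω, A₁ ω * A₂ ω ∂μ) ≤ ∫ ω, (A₂ ω - A₂ ω * B ω + A₁ ω * B ω) ∂μ := by
      refine integral_mono_ae iA₁A₂ ((iA₂.sub iA₂B).add iA₁B) ?_
      filter_upwards [hA₁, hA₂, hB] with ω h1 h2 h3
      rcases h1 with h1 | h1 <;> rcases h2 with h2 | h2 <;> rcases h3 with h3 | h3 <;>
        simp [h1, h2, h3]
    have e2 : Integrable (fun ω => A₂ ω - A₂ ω * B ω) μ := iA₂.sub iA₂B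
    rwa [integral_add e2 iA₁B, integral_sub iA₂ iA₂B] at h
end

section
/- Let A₁, A₂, B be random variables on a probability space, each taking values in {0,1} almost surely. Then E[A₁] + E[A₂] + E[B] − E[A₁B] − E[A₂B] − 1 ≤ E[A₁A₂]. -/
/-!
Since the observables take values in `[0, 1]`, the pointwise identity
`1 - a₁ - a₂ - b + a₁ b + a₂ b + a₁ a₂ = (1 - a₁)(1 - a₂)(1 - b) + a₁ a₂ b`
shows that the integrand `1 - A₁ - A₂ - B + A₁ B + A₂ B + A₁ A₂` is nonnegative;
integrating it and using linearity of the expectation gives the inequality.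
-/

open MeasureTheory unitInterval

lemma bell_wigner_of_mem_unitInterval {a₁ a₂ b : ℝ} (ha₁ : a₁ ∈ I) (ha₂ : a₂ ∈ I) (hb : b ∈ I) :
    a₁ + a₂ + b - a₁ * b - a₂ * b - 1 ≤ a₁ * a₂ := by
  obtain ⟨h₁, h₁'⟩ := ha₁
  obtain ⟨h₂, h₂'⟩ := ha₂
  obtain ⟨h, h'⟩ := hb
  nlinarith [mul_nonneg (mul_nonneg (sub_nonneg.2 h₁') (sub_nonneg.2 h₂')) (sub_nonneg.2 h'),
    mul_nonneg (mul_nonneg h₁ h₂) h]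

section

variable {Ω : Type*} [MeasurableSpace Ω] {μ : Measure Ω}

lemma integrable_of_ae_mem_unitInterval [IsFiniteMeasure μ] {f : Ω → ℝ}
    (hf : AEStronglyMeasurable f μ) (hfI : ∀ᵐ ω ∂μ, f ω ∈ I) : Integrable f μ :=
  Integrable.of_bound hf 1 <| hfI.mono fun _ h ↦ by
    rw [Real.norm_of_nonneg h.1]; exact h.2

lemma ae_mul_mem_unitInterval {f g : Ω → ℝ} (hf : ∀ᵐ ω ∂μ, f ω ∈ I) (hg : ∀ᵐ ω ∂μ, g ω ∈ I) :
    ∀ᵐ ω ∂μ, f ω * g ω ∈ I := by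
  filter_upwards [hf, hg] with ω using unitInterval.mul_mem

theorem integral_bell_wigner [IsProbabilityMeasure μ] {A₁ A₂ B : Ω → ℝ}
    (mA₁ : AEStronglyMeasurable A₁ μ) (mA₂ : AEStronglyMeasurable A₂ μ)
    (mB : AEStronglyMeasurable B μ)
    (hA₁ : ∀ᵐ ω ∂μ, A₁ ω ∈ I) (hA₂ : ∀ᵐ ω ∂μ, A₂ ω ∈ I) (hB : ∀ᵐ ω ∂μ, B ω ∈ I) :
    (∫ ω, A₁ ω ∂μ) + (∫ ω, A₂ ω ∂μ) + (∫ ω, B ω ∂μ)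
      - (∫ ω, A₁ ω * B ω ∂μ) - (∫ ω, A₂ ω * B ω ∂μ) - 1 ≤ ∫ ω, A₁ ω * A₂ ω ∂μ := by
  have i₁ := integrable_of_ae_mem_unitInterval mA₁ hA₁
  have i₂ := integrable_of_ae_mem_unitInterval mA₂ hA₂
  have iB := integrable_of_ae_mem_unitInterval mB hB
  have i₁B := integrable_of_ae_mem_unitInterval (mA₁.mul mB) (ae_mul_mem_unitInterval hA₁ hB)
  have i₂B := integrable_of_ae_mem_unitInterval (mA₂.mul mB) (ae_mul_mem_unitInterval hA₂ hB)
  have i₁₂ := integrable_of_ae_mem_unitInterval (mA₁.mul mA₂) (ae_mul_mem_unitInterval hA₁ hA₂)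
  have h := integral_mono_ae ((((i₁.add i₂).add iB).sub i₁B).sub i₂B)
    (i₁₂.add (integrable_const 1)) <| by
      filter_upwards [hA₁, hA₂, hB] with ω h₁ h₂ hb
      exact sub_le_iff_le_add.1 (bell_wigner_of_mem_unitInterval h₁ h₂ hb)
  rw [integral_sub' (((i₁.add i₂).add iB).sub i₁B) i₂B, integral_sub' ((i₁.add i₂).add iB) i₁B,
    integral_add' (i₁.add i₂) iB, integral_add' i₁ i₂, integral_add' i₁₂ (integrable_const 1)] at h
  simpa using h

end

theorem stmt_4 {Ω : Type*} [MeasurableSpace Ω] (μ : Measure Ω) [IsProbabilityMeasure μ]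
    (A₁ A₂ B : Ω → ℝ)
    (mA₁ : Measurable A₁) (mA₂ : Measurable A₂) (mB : Measurable B)
    (hA₁ : ∀ᵐ ω ∂μ, A₁ ω = 0 ∨ A₁ ω = 1)
    (hA₂ : ∀ᵐ ω ∂μ, A₂ ω = 0 ∨ A₂ ω = 1)
    (hB : ∀ᵐ ω ∂μ, B ω = 0 ∨ B ω = 1) :
    (∫ ω, A₁ ω ∂μ) + (∫ ω, A₂ ω ∂μ) + (∫ ω, B ω ∂μ)
      - (∫ ω, A₁ ω * B ω ∂μ) - (∫ ω, A₂ ω * B ω ∂μ) - 1 ≤ ∫ ω, A₁ ω * A₂ ω ∂μ := by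
  have mem_I {f : Ω → ℝ} (hf : ∀ᵐ ω ∂μ, f ω = 0 ∨ f ω = 1) : ∀ᵐ ω ∂μ, f ω ∈ I :=
    hf.mono fun _ h ↦ by rcases h with h | h <;> simp [h]
  exact integral_bell_wigner mA₁.aestronglyMeasurable mA₂.aestronglyMeasurable
    mB.aestronglyMeasurable (mem_I hA₁) (mem_I hA₂) (mem_I hB)
end

section
/- Let A₁, A₂, B be random variables on a probability space, each taking values in {0,1} almost surely, with E[A₁] = E[A₂] = E[B] = 1/2 and E[A₁B] = E[A₂B] = 1/4 + √2/8. Then √2/4 ≤ E[A₁A₂] ≤ 1/2. -/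
open MeasureTheory

theorem stmt_5 {Ω : Type*} [MeasurableSpace Ω] (μ : Measure Ω) [IsProbabilityMeasure μ]
    (A₁ A₂ B : Ω → ℝ)
    (mA₁ : Measurable A₁) (mA₂ : Measurable A₂) (mB : Measurable B)
    (hA₁ : ∀ᵐ ω ∂μ, A₁ ω = 0 ∨ A₁ ω = 1)
    (hA₂ : ∀ᵐ ω ∂μ, A₂ ω = 0 ∨ A₂ ω = 1)
    (hB : ∀ᵐ ω ∂μ, B ω = 0 ∨ B ω = 1)
    (eA₁ : ∫ ω, A₁ ω ∂μ = 1 / 2) (eA₂ : ∫ ω, A₂ ω ∂μ = 1 / 2)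
    (eB : ∫ ω, B ω ∂μ = 1 / 2)
    (eA₁B : ∫ ω, A₁ ω * B ω ∂μ = 1 / 4 + Real.sqrt 2 / 8)
    (eA₂B : ∫ ω, A₂ ω * B ω ∂μ = 1 / 4 + Real.sqrt 2 / 8) :
    Real.sqrt 2 / 4 ≤ ∫ ω, A₁ ω * A₂ ω ∂μ ∧ (∫ ω, A₁ ω * A₂ ω ∂μ) ≤ 1 / 2 := by
  have bound : ∀ (X : Ω → ℝ), Measurable X → (∀ᵐ ω ∂μ, X ω = 0 ∨ X ω = 1) →
      Integrable X μ := by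
    intro X mX hX
    refine (integrable_const (1 : ℝ)).mono' mX.aestronglyMeasurable ?_
    filter_upwards [hX] with ω h
    rcases h with h | h <;> simp [h]
  have iA₁ := bound A₁ mA₁ hA₁
  have iB := bound B mB hB
  have iA₁B := bound (fun ω => A₁ ω * B ω) (mA₁.mul mB)
    (by filter_upwards [hA₁, hB] with ω h1 h2; rcases h1 with h1 | h1 <;>
      rcases h2 with h2 | h2 <;> simp [h1, h2])
  have iA₂B := bound (fun ω => A₂ ω * B ω) (mA₂.mul mB)
    (by filter_upwards [hA₂, hB] with ω h1 h2; rcases h1 with h1 | h1 <;>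
      rcases h2 with h2 | h2 <;> simp [h1, h2])
  have iA₁A₂ := bound (fun ω => A₁ ω * A₂ ω) (mA₁.mul mA₂)
    (by filter_upwards [hA₁, hA₂] with ω h1 h2; rcases h1 with h1 | h1 <;>
      rcases h2 with h2 | h2 <;> simp [h1, h2])
  constructor
  · have hle : (∫ ω, (A₁ ω * B ω + A₂ ω * B ω - B ω) ∂μ) ≤ ∫ ω, A₁ ω * A₂ ω ∂μ := by
      refine integral_mono_ae ((iA₁B.add iA₂B).sub iB : Integrable (fun ω => A₁ ω * B ω + A₂ ω * B ω - B ω) μ) iA₁A₂ ?_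
      filter_upwards [hA₁, hA₂, hB] with ω h1 h2 h3
      rcases h1 with h1 | h1 <;> rcases h2 with h2 | h2 <;> rcases h3 with h3 | h3 <;>
        simp [h1, h2, h3]
    have isum : Integrable (fun ω => A₁ ω * B ω + A₂ ω * B ω) μ := iA₁B.add iA₂B
    rw [integral_sub isum iB, integral_add iA₁B iA₂B, eA₁B, eA₂B, eB] at hle
    linarith
  · have hle : (∫ ω, A₁ ω * A₂ ω ∂μ) ≤ ∫ ω, A₁ ω ∂μ := by
      refine integral_mono_ae iA₁A₂ iA₁ ?_
      filter_upwards [hA₁, hA₂] with ω h1 h2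
      rcases h1 with h1 | h1 <;> rcases h2 with h2 | h2 <;> simp [h1, h2]
    rw [eA₁] at hle
    exact hle
end

section
/- Let A₁, A₂, B be random variables on a probability space, each taking values in {0,1} almost surely, with E[A₁] = E[A₂] = E[B] = 1/2, E[A₁B] = 1/4 + √2/8 and E[A₂B] = 1/4 − √2/8. Then 0 ≤ E[A₁A₂] ≤ 1/2 − √2/4. -/
open MeasureTheory

theorem stmt_6 {Ω : Type*} [MeasurableSpace Ω] (μ : Measure Ω) [IsProbabilityMeasure μ]
    (A₁ A₂ B : Ω → ℝ)
    (mA₁ : Measurable A₁) (mA₂ : Measurable A₂) (mB : Measurable B)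
    (hA₁ : ∀ᵐ ω ∂μ, A₁ ω = 0 ∨ A₁ ω = 1)
    (hA₂ : ∀ᵐ ω ∂μ, A₂ ω = 0 ∨ A₂ ω = 1)
    (hB : ∀ᵐ ω ∂μ, B ω = 0 ∨ B ω = 1)
    (eA₁ : ∫ ω, A₁ ω ∂μ = 1 / 2) (eA₂ : ∫ ω, A₂ ω ∂μ = 1 / 2)
    (eB : ∫ ω, B ω ∂μ = 1 / 2)
    (eA₁B : ∫ ω, A₁ ω * B ω ∂μ = 1 / 4 + Real.sqrt 2 / 8)
    (eA₂B : ∫ ω, A₂ ω * B ω ∂μ = 1 / 4 - Real.sqrt 2 / 8) :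
    0 ≤ ∫ ω, A₁ ω * A₂ ω ∂μ ∧ (∫ ω, A₁ ω * A₂ ω ∂μ) ≤ 1 / 2 - Real.sqrt 2 / 4 := by
  have key : ∀ (f g : Ω → ℝ), Measurable f → Measurable g →
      (∀ᵐ ω ∂μ, f ω = 0 ∨ f ω = 1) → (∀ᵐ ω ∂μ, g ω = 0 ∨ g ω = 1) →
      Integrable (fun ω => f ω * g ω) μ := by
    intro f g mf mg hf hg
    refine Integrable.mono' (integrable_const (1:ℝ)) (mf.mul mg).aestronglyMeasurable ?_
    filter_upwards [hf, hg] with ω h1 h2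
    rcases h1 with h1 | h1 <;> rcases h2 with h2 | h2 <;> simp [h1, h2]
  have key1 : ∀ (f : Ω → ℝ), Measurable f →
      (∀ᵐ ω ∂μ, f ω = 0 ∨ f ω = 1) → Integrable f μ := by
    intro f mf hf
    refine Integrable.mono' (integrable_const (1:ℝ)) mf.aestronglyMeasurable ?_
    filter_upwards [hf] with ω h1
    rcases h1 with h1 | h1 <;> simp [h1]
  have iA1 := key1 A₁ mA₁ hA₁
  have iA1B := key A₁ B mA₁ mB hA₁ hB
  have iA2B := key A₂ B mA₂ mB hA₂ hB
  have iA1A2 := key A₁ A₂ mA₁ mA₂ hA₁ hA₂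
  constructor
  · apply integral_nonneg_of_ae
    filter_upwards [hA₁, hA₂] with ω h1 h2
    rcases h1 with h1 | h1 <;> rcases h2 with h2 | h2 <;> simp [h1, h2]
  · have hle : (∫ ω, A₁ ω * A₂ ω ∂μ) ≤ ∫ ω, (A₁ ω - A₁ ω * B ω + A₂ ω * B ω) ∂μ := by
      refine integral_mono_ae iA1A2 ((iA1.sub iA1B).add iA2B) ?_
      filter_upwards [hA₁, hA₂, hB] with ω h1 h2 h3
      rcases h1 with h1 | h1 <;> rcases h2 with h2 | h2 <;> rcases h3 with h3 | h3 <;>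
        simp [h1, h2, h3]
    have iSub : Integrable (fun ω => A₁ ω - A₁ ω * B ω) μ := iA1.sub iA1B
    rw [integral_add iSub iA2B, integral_sub iA1 iA1B, eA₁, eA₁B, eA₂B] at hle
    linarith
end

section
/- Let A₁, A₂, B₁ be random variables on a probability space, each taking values in {0,1} almost surely, satisfying 1 − E[A₂] − E[B₁] + E[A₂B₁] = 0 and E[A₁] − E[A₁B₁] > 0. Then E[A₁A₂] ≥ E[A₁] − E[A₁B₁] > 0. -/
open MeasureTheory

lemma stmt_8_aux {Ω : Type*} [MeasurableSpace Ω] (μ : Measure Ω) [IsProbabilityMeasure μ]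
    {f : Ω → ℝ} (mf : Measurable f) (hf : ∀ᵐ ω ∂μ, f ω = 0 ∨ f ω = 1) :
    Integrable f μ := by
  refine (integrable_const (1 : ℝ)).mono' mf.aestronglyMeasurable ?_
  filter_upwards [hf] with ω h
  rcases h with h | h <;> simp [h]

theorem stmt_8 {Ω : Type*} [MeasurableSpace Ω] (μ : Measure Ω) [IsProbabilityMeasure μ]
    (A₁ A₂ B₁ : Ω → ℝ)
    (mA₁ : Measurable A₁) (mA₂ : Measurable A₂) (mB₁ : Measurable B₁)
    (hA₁ : ∀ᵐ ω ∂μ, A₁ ω = 0 ∨ A₁ ω = 1)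
    (hA₂ : ∀ᵐ ω ∂μ, A₂ ω = 0 ∨ A₂ ω = 1)
    (hB₁ : ∀ᵐ ω ∂μ, B₁ ω = 0 ∨ B₁ ω = 1)
    (h1 : 1 - (∫ ω, A₂ ω ∂μ) - (∫ ω, B₁ ω ∂μ) + (∫ ω, A₂ ω * B₁ ω ∂μ) = 0)
    (h2 : 0 < (∫ ω, A₁ ω ∂μ) - (∫ ω, A₁ ω * B₁ ω ∂μ)) :
    (∫ ω, A₁ ω ∂μ) - (∫ ω, A₁ ω * B₁ ω ∂μ) ≤ (∫ ω, A₁ ω * A₂ ω ∂μ) ∧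
    0 < ∫ ω, A₁ ω * A₂ ω ∂μ := by
  have iA₁ : Integrable A₁ μ := stmt_8_aux μ mA₁ hA₁
  have iA₂ : Integrable A₂ μ := stmt_8_aux μ mA₂ hA₂
  have iB₁ : Integrable B₁ μ := stmt_8_aux μ mB₁ hB₁
  have hA₂B₁ : ∀ᵐ ω ∂μ, A₂ ω * B₁ ω = 0 ∨ A₂ ω * B₁ ω = 1 := by
    filter_upwards [hA₂, hB₁] with ω h h' <;> rcases h with h | h <;>
      rcases h' with h' | h' <;> simp [h, h']
  have hA₁B₁ : ∀ᵐ ω ∂μ, A₁ ω * B₁ ω = 0 ∨ A₁ ω * B₁ ω = 1 := by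
    filter_upwards [hA₁, hB₁] with ω h h' <;> rcases h with h | h <;>
      rcases h' with h' | h' <;> simp [h, h']
  have hA₁A₂ : ∀ᵐ ω ∂μ, A₁ ω * A₂ ω = 0 ∨ A₁ ω * A₂ ω = 1 := by
    filter_upwards [hA₁, hA₂] with ω h h' <;> rcases h with h | h <;>
      rcases h' with h' | h' <;> simp [h, h']
  have iA₂B₁ : Integrable (fun ω => A₂ ω * B₁ ω) μ := stmt_8_aux μ (mA₂.mul mB₁) hA₂B₁
  have iA₁B₁ : Integrable (fun ω => A₁ ω * B₁ ω) μ := stmt_8_aux μ (mA₁.mul mB₁) hA₁B₁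
  have iA₁A₂ : Integrable (fun ω => A₁ ω * A₂ ω) μ := stmt_8_aux μ (mA₁.mul mA₂) hA₁A₂
  -- the integral of g = (1 - A₂)(1 - B₁) is zero
  set g : Ω → ℝ := fun ω => (1 - A₂ ω) * (1 - B₁ ω) with hg
  have ig : Integrable g μ := by
    have : g = fun ω => 1 - A₂ ω - B₁ ω + A₂ ω * B₁ ω := by
      funext ω; simp [hg]; ring
    rw [this]
    exact (((integrable_const 1).sub iA₂).sub iB₁).add iA₂B₁
  have hgint : ∫ ω, g ω ∂μ = 0 := by
    have : ∫ ω, g ω ∂μ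
        = 1 - (∫ ω, A₂ ω ∂μ) - (∫ ω, B₁ ω ∂μ) + (∫ ω, A₂ ω * B₁ ω ∂μ) := by
      have : ∫ ω, g ω ∂μ = ∫ ω, (1 - A₂ ω - B₁ ω + A₂ ω * B₁ ω) ∂μ := by
        congr 1; funext ω; simp [hg]; ring
      have i1 : Integrable (fun ω => (1:ℝ) - A₂ ω) μ := (integrable_const 1).sub iA₂
      have i2 : Integrable (fun ω => (1:ℝ) - A₂ ω - B₁ ω) μ := i1.sub iB₁
      rw [this, integral_add i2 iA₂B₁, integral_sub i1 iB₁,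
        integral_sub (integrable_const 1) iA₂]
      simp
    rw [this, h1]
  have hg0 : 0 ≤ᵐ[μ] g := by
    filter_upwards [hA₂, hB₁] with ω h h'
    rcases h with h | h <;> rcases h' with h' | h' <;> simp [hg, h, h']
  have hgz : g =ᵐ[μ] 0 := by
    have := (integral_eq_zero_iff_of_nonneg_ae hg0 ig).mp hgint
    exact this
  -- pointwise: A₁ - A₁ B₁ ≤ A₁ A₂ a.e.
  have key : ∀ᵐ ω ∂μ, A₁ ω - A₁ ω * B₁ ω ≤ A₁ ω * A₂ ω := by
    filter_upwards [hA₁, hA₂, hB₁, hgz] with ω h1' h2' h3' hgz'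
    simp only [hg, Pi.zero_apply] at hgz'
    rcases h1' with h1' | h1' <;> rcases h2' with h2' | h2' <;>
      rcases h3' with h3' | h3' <;> simp [h1', h2', h3'] at hgz' ⊢ <;> linarith
  have hmain : (∫ ω, A₁ ω ∂μ) - (∫ ω, A₁ ω * B₁ ω ∂μ) ≤ ∫ ω, A₁ ω * A₂ ω ∂μ := by
    rw [← integral_sub iA₁ iA₁B₁]
    exact integral_mono_ae (iA₁.sub iA₁B₁) iA₁A₂ key
  exact ⟨hmain, lt_of_lt_of_le h2 hmain⟩
end

section
/- Let A₁, A₂, B₂ be random variables on a probability space, each taking values in {0,1} almost surely, satisfying E[A₂] − E[A₂B₂] = 0 and E[A₁B₂] = 0. Then E[A₁A₂] = 0. -/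
open MeasureTheory

theorem stmt_9 {Ω : Type*} [MeasurableSpace Ω] (μ : Measure Ω) [IsProbabilityMeasure μ]
    (A₁ A₂ B₂ : Ω → ℝ)
    (mA₁ : Measurable A₁) (mA₂ : Measurable A₂) (mB₂ : Measurable B₂)
    (hA₁ : ∀ᵐ ω ∂μ, A₁ ω = 0 ∨ A₁ ω = 1)
    (hA₂ : ∀ᵐ ω ∂μ, A₂ ω = 0 ∨ A₂ ω = 1)
    (hB₂ : ∀ᵐ ω ∂μ, B₂ ω = 0 ∨ B₂ ω = 1)
    (h1 : (∫ ω, A₂ ω ∂μ) - (∫ ω, A₂ ω * B₂ ω ∂μ) = 0)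
    (h2 : ∫ ω, A₁ ω * B₂ ω ∂μ = 0) :
    ∫ ω, A₁ ω * A₂ ω ∂μ = 0 := by
  have bound : ∀ (f : Ω → ℝ), Measurable f → (∀ᵐ ω ∂μ, f ω = 0 ∨ f ω = 1) →
      Integrable f μ := by
    intro f mf hf
    refine Integrable.mono' (integrable_const (1 : ℝ)) mf.aestronglyMeasurable ?_
    filter_upwards [hf] with ω h
    rcases h with h | h <;> simp [h]
  have iA₂ : Integrable A₂ μ := bound A₂ mA₂ hA₂
  have hA₂B₂ : ∀ᵐ ω ∂μ, A₂ ω * B₂ ω = 0 ∨ A₂ ω * B₂ ω = 1 := by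
    filter_upwards [hA₂, hB₂] with ω h h'
    rcases h with h | h <;> rcases h' with h' | h' <;> simp [h, h']
  have iA₂B₂ : Integrable (fun ω => A₂ ω * B₂ ω) μ := bound _ (mA₂.mul mB₂) hA₂B₂
  -- g = A₂ - A₂B₂ is a.e. nonneg with integral 0
  have hgint : ∫ ω, (A₂ ω - A₂ ω * B₂ ω) ∂μ = 0 := by
    rw [integral_sub iA₂ iA₂B₂]; exact h1
  have hgnn : 0 ≤ᵐ[μ] fun ω => A₂ ω - A₂ ω * B₂ ω := by
    filter_upwards [hA₂, hB₂] with ω h h'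
    rcases h with h | h <;> rcases h' with h' | h' <;> simp [h, h']
  have hg0 : (fun ω => A₂ ω - A₂ ω * B₂ ω) =ᵐ[μ] 0 := by
    exact ((integral_eq_zero_iff_of_nonneg_ae hgnn (iA₂.sub iA₂B₂)).1 hgint)
  -- A₁B₂ is a.e. zero
  have hA₁B₂01 : ∀ᵐ ω ∂μ, A₁ ω * B₂ ω = 0 ∨ A₁ ω * B₂ ω = 1 := by
    filter_upwards [hA₁, hB₂] with ω h h'
    rcases h with h | h <;> rcases h' with h' | h' <;> simp [h, h']
  have iA₁B₂ : Integrable (fun ω => A₁ ω * B₂ ω) μ := bound _ (mA₁.mul mB₂) hA₁B₂01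
  have hnn : 0 ≤ᵐ[μ] fun ω => A₁ ω * B₂ ω := by
    filter_upwards [hA₁B₂01] with ω h
    rcases h with h | h <;> simp [h]
  have h20 : (fun ω => A₁ ω * B₂ ω) =ᵐ[μ] 0 :=
    (integral_eq_zero_iff_of_nonneg_ae hnn iA₁B₂).1 h2
  -- conclude A₁A₂ = 0 a.e.
  have hfinal : (fun ω => A₁ ω * A₂ ω) =ᵐ[μ] 0 := by
    filter_upwards [hA₁, hA₂, hB₂, hg0, h20] with ω h1' h2' h3' hg hb
    simp only [Pi.zero_apply] at hg hb ⊢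
    rcases h2' with h | h
    · simp [h]
    · have hb2 : B₂ ω = 1 := by
        rcases h3' with h' | h'
        · exfalso; rw [h, h'] at hg; norm_num at hg
        · exact h'
      have : A₁ ω = 0 := by rw [hb2] at hb; simpa using hb
      simp [this]
  rw [integral_congr_ae hfinal]
  simp
end

section
/- There is no probability space carrying random variables A₁, A₂, B₁, B₂, each taking values in {0,1} almost surely, such that 1 − E[A₂] − E[B₁] + E[A₂B₁] = 0, E[A₂] − E[A₂B₂] = 0, E[A₁B₂] = 0, and E[A₁] − E[A₁B₁] > 0. -/
open MeasureTheory

theorem stmt_10 :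
    ¬ ∃ (Ω : Type) (_ : MeasurableSpace Ω) (μ : Measure Ω) (A₁ A₂ B₁ B₂ : Ω → ℝ),
      IsProbabilityMeasure μ ∧
      Measurable A₁ ∧ Measurable A₂ ∧ Measurable B₁ ∧ Measurable B₂ ∧
      (∀ᵐ ω ∂μ, A₁ ω = 0 ∨ A₁ ω = 1) ∧ (∀ᵐ ω ∂μ, A₂ ω = 0 ∨ A₂ ω = 1) ∧
      (∀ᵐ ω ∂μ, B₁ ω = 0 ∨ B₁ ω = 1) ∧ (∀ᵐ ω ∂μ, B₂ ω = 0 ∨ B₂ ω = 1) ∧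
      (1 - (∫ ω, A₂ ω ∂μ) - (∫ ω, B₁ ω ∂μ) + (∫ ω, A₂ ω * B₁ ω ∂μ) = 0) ∧
      ((∫ ω, A₂ ω ∂μ) - (∫ ω, A₂ ω * B₂ ω ∂μ) = 0) ∧
      (∫ ω, A₁ ω * B₂ ω ∂μ = 0) ∧
      (0 < (∫ ω, A₁ ω ∂μ) - (∫ ω, A₁ ω * B₁ ω ∂μ)) := by
  rintro ⟨Ω, mΩ, μ, A₁, A₂, B₁, B₂, hprob, mA₁, mA₂, mB₁, mB₂, hA₁, hA₂, hB₁, hB₂,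
    e1, e2, e3, e4⟩
  -- integrability helper
  have key : ∀ (f : Ω → ℝ), Measurable f → (∀ᵐ ω ∂μ, f ω = 0 ∨ f ω = 1) →
      Integrable f μ := by
    intro f mf hf
    refine ⟨mf.aestronglyMeasurable, HasFiniteIntegral.of_bounded (C := 1) ?_⟩
    filter_upwards [hf] with ω h
    rcases h with h | h <;> simp [h]
  have prod01 : ∀ (f g : Ω → ℝ), (∀ᵐ ω ∂μ, f ω = 0 ∨ f ω = 1) →
      (∀ᵐ ω ∂μ, g ω = 0 ∨ g ω = 1) → (∀ᵐ ω ∂μ, f ω * g ω = 0 ∨ f ω * g ω = 1) := by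
    intro f g hf hg
    filter_upwards [hf, hg] with ω h1 h2
    rcases h1 with h1 | h1 <;> rcases h2 with h2 | h2 <;> simp [h1, h2]
  have iA₁ := key _ mA₁ hA₁
  have iA₂ := key _ mA₂ hA₂
  have iB₁ := key _ mB₁ hB₁
  have iB₂ := key _ mB₂ hB₂
  have iA₂B₁ := key _ (mA₂.mul mB₁) (prod01 _ _ hA₂ hB₁)
  have iA₂B₂ := key _ (mA₂.mul mB₂) (prod01 _ _ hA₂ hB₂)
  have iA₁B₂ := key _ (mA₁.mul mB₂) (prod01 _ _ hA₁ hB₂)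
  have iA₁B₁ := key _ (mA₁.mul mB₁) (prod01 _ _ hA₁ hB₁)
  -- condition (s1) as a zero integral of nonneg function
  have h1 : ∫ ω, (1 - A₂ ω) * (1 - B₁ ω) ∂μ = 0 := by
    have : (fun ω => (1 - A₂ ω) * (1 - B₁ ω)) =
        fun ω => 1 - A₂ ω - B₁ ω + A₂ ω * B₁ ω := by
      funext ω; ring
    rw [this]
    rw [integral_add (f := fun ω => 1 - A₂ ω - B₁ ω) (g := fun ω => A₂ ω * B₁ ω)
        ((((integrable_const 1).sub iA₂).sub iB₁)) iA₂B₁,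
      integral_sub (f := fun ω => 1 - A₂ ω) (g := fun ω => B₁ ω)
        ((integrable_const 1).sub iA₂) iB₁,
      integral_sub (f := fun _ => (1:ℝ)) (g := fun ω => A₂ ω) (integrable_const 1) iA₂]
    simpa using e1
  have h2 : ∫ ω, A₂ ω * (1 - B₂ ω) ∂μ = 0 := by
    have : (fun ω => A₂ ω * (1 - B₂ ω)) = fun ω => A₂ ω - A₂ ω * B₂ ω := by
      funext ω; ring
    rw [this, integral_sub (f := fun ω => A₂ ω) (g := fun ω => A₂ ω * B₂ ω) iA₂ iA₂B₂]
    simpa using e2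
  -- derive a.e. statements
  have ae1 : ∀ᵐ ω ∂μ, (1 - A₂ ω) * (1 - B₁ ω) = 0 := by
    have nn : 0 ≤ᵐ[μ] fun ω => (1 - A₂ ω) * (1 - B₁ ω) := by
      filter_upwards [hA₂, hB₁] with ω h1 h2
      rcases h1 with h1 | h1 <;> rcases h2 with h2 | h2 <;> simp [h1, h2]
    have int : Integrable (fun ω => (1 - A₂ ω) * (1 - B₁ ω)) μ := by
      have : (fun ω => (1 - A₂ ω) * (1 - B₁ ω)) =
          fun ω => 1 - A₂ ω - B₁ ω + A₂ ω * B₁ ω := by funext ω; ring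
      rw [this]; exact (((integrable_const 1).sub iA₂).sub iB₁).add iA₂B₁
    have := (integral_eq_zero_iff_of_nonneg_ae nn int).mp h1
    filter_upwards [this] with ω h using h
  have ae2 : ∀ᵐ ω ∂μ, A₂ ω * (1 - B₂ ω) = 0 := by
    have nn : 0 ≤ᵐ[μ] fun ω => A₂ ω * (1 - B₂ ω) := by
      filter_upwards [hA₂, hB₂] with ω h1 h2
      rcases h1 with h1 | h1 <;> rcases h2 with h2 | h2 <;> simp [h1, h2]
    have int : Integrable (fun ω => A₂ ω * (1 - B₂ ω)) μ := by
      have : (fun ω => A₂ ω * (1 - B₂ ω)) = fun ω => A₂ ω - A₂ ω * B₂ ω := by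
        funext ω; ring
      rw [this]; exact iA₂.sub iA₂B₂
    have := (integral_eq_zero_iff_of_nonneg_ae nn int).mp h2
    filter_upwards [this] with ω h using h
  have ae3 : ∀ᵐ ω ∂μ, A₁ ω * B₂ ω = 0 := by
    have nn : 0 ≤ᵐ[μ] fun ω => A₁ ω * B₂ ω := by
      filter_upwards [hA₁, hB₂] with ω h1 h2
      rcases h1 with h1 | h1 <;> rcases h2 with h2 | h2 <;> simp [h1, h2]
    have := (integral_eq_zero_iff_of_nonneg_ae nn iA₁B₂).mp e3
    filter_upwards [this] with ω h using h
  -- conclude A₁ (1 - B₁) = 0 a.e.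
  have ae4 : ∀ᵐ ω ∂μ, A₁ ω - A₁ ω * B₁ ω = 0 := by
    filter_upwards [hA₁, hA₂, hB₁, hB₂, ae1, ae2, ae3] with ω h1 h2 h3 h4 p1 p2 p3
    rcases h1 with h1 | h1
    · simp [h1]
    rcases h3 with h3 | h3
    · -- B₁ = 0 ⇒ (1 - A₂) = 0 ⇒ A₂ = 1 ⇒ B₂ = 1 ⇒ A₁ B₂ = 0 contradicts A₁ = 1
      exfalso
      have hA2 : A₂ ω = 1 := by
        rcases h2 with h2 | h2
        · rw [h2, h3] at p1; norm_num at p1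
        · exact h2
      have hB2 : B₂ ω = 1 := by
        rcases h4 with h4 | h4
        · rw [hA2, h4] at p2; norm_num at p2
        · exact h4
      rw [h1, hB2] at p3; norm_num at p3
    · simp [h1, h3]
  have : (∫ ω, A₁ ω ∂μ) - (∫ ω, A₁ ω * B₁ ω ∂μ) = 0 := by
    rw [← integral_sub (f := fun ω => A₁ ω) (g := fun ω => A₁ ω * B₁ ω) iA₁ iA₁B₁]
    exact integral_eq_zero_of_ae ae4
  linarith
end

section
/- There is no probability space carrying random variables A₁, A₂, B₁, B₂, C₁, C₂, each taking values in {−1, 1} almost surely, such that E[A₁B₁C₁] = −1, E[A₂B₂C₁] = −1, E[A₂B₁C₂] = −1, and E[A₁B₂C₂] = 1. -/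
/-!
If the four perfect correlations held, each triple product would equal its expectation almost
surely, so at almost every sample point the four products would be -1, -1, -1, 1. But every
observable occurs exactly twice among them, so their product is a product of squares, namely 1,
whereas the product of the prescribed values is -1.
-/

open MeasureTheory

lemma not_ghz_sign_pattern {R : Type*} [CommRing R] [CharZero R] {a₁ a₂ b₁ b₂ c₁ c₂ : R}
    (ha₁ : a₁ * a₁ = 1) (ha₂ : a₂ * a₂ = 1) (hb₁ : b₁ * b₁ = 1) (hb₂ : b₂ * b₂ = 1)
    (hc₁ : c₁ * c₁ = 1) (hc₂ : c₂ * c₂ = 1) :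
    ¬ (a₁ * b₁ * c₁ = -1 ∧ a₂ * b₂ * c₁ = -1 ∧ a₂ * b₁ * c₂ = -1 ∧ a₁ * b₂ * c₂ = 1) := by
  rintro ⟨h₁, h₂, h₃, h₄⟩
  have : (2 : R) = 0 := by
    linear_combination (a₂ * b₂ * c₁) * (a₂ * b₁ * c₂) * (a₁ * b₂ * c₂) * h₁
      - (a₂ * b₁ * c₂) * (a₁ * b₂ * c₂) * h₂ + (a₁ * b₂ * c₂) * h₃ - h₄
      - (a₂ * a₂) * (b₁ * b₁) * (b₂ * b₂) * (c₁ * c₁) * (c₂ * c₂) * ha₁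
      - (b₁ * b₁) * (b₂ * b₂) * (c₁ * c₁) * (c₂ * c₂) * ha₂
      - (b₂ * b₂) * (c₁ * c₁) * (c₂ * c₂) * hb₁ - (c₁ * c₁) * (c₂ * c₂) * hb₂
      - (c₂ * c₂) * hc₁ - hc₂
  exact two_ne_zero this

section

variable {Ω : Type*} [MeasurableSpace Ω] {μ : Measure Ω}

lemma ae_sign_mul {f g : Ω → ℝ} (hf : ∀ᵐ ω ∂μ, f ω = -1 ∨ f ω = 1)
    (hg : ∀ᵐ ω ∂μ, g ω = -1 ∨ g ω = 1) :
    ∀ᵐ ω ∂μ, f ω * g ω = -1 ∨ f ω * g ω = 1 := by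
  filter_upwards [hf, hg] with ω hfω hgω
  rcases hfω with h | h <;> rcases hgω with h' | h' <;> simp [h, h']

lemma integrable_of_ae_sign [IsFiniteMeasure μ] {f : Ω → ℝ} (hm : AEStronglyMeasurable f μ)
    (hf : ∀ᵐ ω ∂μ, f ω = -1 ∨ f ω = 1) : Integrable f μ :=
  Integrable.of_bound hm 1 <| by
    filter_upwards [hf] with ω h
    rcases h with h | h <;> simp [h]

lemma ae_eq_const_of_ae_le_of_integral_eq [IsProbabilityMeasure μ] {f : Ω → ℝ} {c : ℝ}
    (hf : Integrable f μ) (hle : ∀ᵐ ω ∂μ, f ω ≤ c) (hint : ∫ ω, f ω ∂μ = c) :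
    ∀ᵐ ω ∂μ, f ω = c :=
  (integral_eq_iff_of_ae_le hf (integrable_const c) hle).mp (by simpa using hint)

lemma ae_eq_of_ae_sign_of_integral_eq [IsProbabilityMeasure μ] {f : Ω → ℝ} {c : ℝ}
    (hc : c = -1 ∨ c = 1) (hm : AEStronglyMeasurable f μ) (hf : ∀ᵐ ω ∂μ, f ω = -1 ∨ f ω = 1)
    (hint : ∫ ω, f ω ∂μ = c) : ∀ᵐ ω ∂μ, f ω = c := by
  have hcc : c * c = 1 := by rcases hc with rfl | rfl <;> norm_num
  -- `c * f` is a sign bounded by `1` whose mean is `c * c = 1`.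
  have hcf : ∀ᵐ ω ∂μ, c * f ω = 1 := by
    refine ae_eq_const_of_ae_le_of_integral_eq ((integrable_of_ae_sign hm hf).const_mul c) ?_
      (by rw [integral_const_mul, hint, hcc])
    filter_upwards [hf] with ω h
    rcases hc with rfl | rfl <;> rcases h with h | h <;> simp [h]
  filter_upwards [hcf] with ω h
  linear_combination c * h - f ω * hcc

end

theorem stmt_12 :
    ¬ ∃ (Ω : Type) (_ : MeasurableSpace Ω) (μ : Measure Ω) (A₁ A₂ B₁ B₂ C₁ C₂ : Ω → ℝ),
      IsProbabilityMeasure μ ∧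
      Measurable A₁ ∧ Measurable A₂ ∧ Measurable B₁ ∧ Measurable B₂ ∧
      Measurable C₁ ∧ Measurable C₂ ∧
      (∀ᵐ ω ∂μ, A₁ ω = -1 ∨ A₁ ω = 1) ∧ (∀ᵐ ω ∂μ, A₂ ω = -1 ∨ A₂ ω = 1) ∧
      (∀ᵐ ω ∂μ, B₁ ω = -1 ∨ B₁ ω = 1) ∧ (∀ᵐ ω ∂μ, B₂ ω = -1 ∨ B₂ ω = 1) ∧
      (∀ᵐ ω ∂μ, C₁ ω = -1 ∨ C₁ ω = 1) ∧ (∀ᵐ ω ∂μ, C₂ ω = -1 ∨ C₂ ω = 1) ∧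
      (∫ ω, A₁ ω * B₁ ω * C₁ ω ∂μ = -1) ∧
      (∫ ω, A₂ ω * B₂ ω * C₁ ω ∂μ = -1) ∧
      (∫ ω, A₂ ω * B₁ ω * C₂ ω ∂μ = -1) ∧
      (∫ ω, A₁ ω * B₂ ω * C₂ ω ∂μ = 1) := by
  rintro ⟨Ω, _, μ, A₁, A₂, B₁, B₂, C₁, C₂, _, mA₁, mA₂, mB₁, mB₂, mC₁, mC₂,
    sA₁, sA₂, sB₁, sB₂, sC₁, sC₂, i₁, i₂, i₃, i₄⟩
  have e₁ := ae_eq_of_ae_sign_of_integral_eq (.inl rfl)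
    ((mA₁.mul mB₁).mul mC₁).aestronglyMeasurable (ae_sign_mul (ae_sign_mul sA₁ sB₁) sC₁) i₁
  have e₂ := ae_eq_of_ae_sign_of_integral_eq (.inl rfl)
    ((mA₂.mul mB₂).mul mC₁).aestronglyMeasurable (ae_sign_mul (ae_sign_mul sA₂ sB₂) sC₁) i₂
  have e₃ := ae_eq_of_ae_sign_of_integral_eq (.inl rfl)
    ((mA₂.mul mB₁).mul mC₂).aestronglyMeasurable (ae_sign_mul (ae_sign_mul sA₂ sB₁) sC₂) i₃
  have e₄ := ae_eq_of_ae_sign_of_integral_eq (.inr rfl)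
    ((mA₁.mul mB₂).mul mC₂).aestronglyMeasurable (ae_sign_mul (ae_sign_mul sA₁ sB₂) sC₂) i₄
  have hfalse : ∀ᵐ _ ∂μ, False := by
    filter_upwards [e₁, e₂, e₃, e₄, sA₁, sA₂, sB₁, sB₂, sC₁, sC₂]
      with ω h₁ h₂ h₃ h₄ a₁ a₂ b₁ b₂ c₁ c₂
    exact not_ghz_sign_pattern (mul_self_eq_one_iff.mpr a₁.symm) (mul_self_eq_one_iff.mpr a₂.symm)
      (mul_self_eq_one_iff.mpr b₁.symm) (mul_self_eq_one_iff.mpr b₂.symm)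
      (mul_self_eq_one_iff.mpr c₁.symm) (mul_self_eq_one_iff.mpr c₂.symm) ⟨h₁, h₂, h₃, h₄⟩
  exact hfalse.exists.elim fun _ ↦ id
end

section
/- Let A₁, A₂, B₁, B₂, C₁ be random variables on a probability space, each taking values in {−1, 1} almost surely, with E[A₁B₁C₁] = −1 and E[A₂B₂C₁] = −1. Then E[A₁A₂B₁B₂] = 1. -/
/-! Each perfect anticorrelation forces its ±1-valued product to be `-1` almost surely, since an
integrable function bounded below by `-1` with mean `-1` equals `-1` a.e. Multiplying the two
identities `A₁B₁C₁ = -1` and `A₂B₂C₁ = -1` and using `C₁² = 1` gives `A₁A₂B₁B₂ = 1` a.s. -/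

open MeasureTheory

section

variable {Ω : Type*} [MeasurableSpace Ω] {μ : Measure Ω}

lemma ae_eq_of_ae_le_of_integral_eq [IsProbabilityMeasure μ] {f : Ω → ℝ} {c : ℝ}
    (hf : Integrable f μ) (hle : ∀ᵐ ω ∂μ, c ≤ f ω) (hint : ∫ ω, f ω ∂μ = c) :
    ∀ᵐ ω ∂μ, f ω = c := by
  have hconst : (fun _ ↦ c) =ᵐ[μ] f :=
    (integral_eq_iff_of_ae_le (integrable_const c) hf hle).mp (by simp [hint])
  exact hconst.mono fun _ h ↦ h.symm

lemma ae_abs_eq_one {f : Ω → ℝ} (hf : ∀ᵐ ω ∂μ, f ω = -1 ∨ f ω = 1) : ∀ᵐ ω ∂μ, |f ω| = 1 :=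
  hf.mono fun _ h ↦ (abs_eq zero_le_one).mpr h.symm

lemma ae_mul_mul_eq_neg_one_of_integral_eq_neg_one [IsProbabilityMeasure μ] {X Y Z : Ω → ℝ}
    (hX : ∀ᵐ ω ∂μ, |X ω| = 1) (hY : ∀ᵐ ω ∂μ, |Y ω| = 1) (hZ : ∀ᵐ ω ∂μ, |Z ω| = 1)
    (h : ∫ ω, X ω * Y ω * Z ω ∂μ = -1) :
    ∀ᵐ ω ∂μ, X ω * Y ω * Z ω = -1 := by
  refine ae_eq_of_ae_le_of_integral_eq (.of_integral_ne_zero (by norm_num [h])) ?_ h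
  filter_upwards [hX, hY, hZ] with ω hx hy hz
  simpa [abs_mul, hx, hy, hz] using neg_abs_le (X ω * Y ω * Z ω)

end

theorem stmt_13_general {Ω : Type*} [MeasurableSpace Ω] (μ : Measure Ω) [IsProbabilityMeasure μ]
    (A₁ A₂ B₁ B₂ C₁ : Ω → ℝ)
    (hA₁ : ∀ᵐ ω ∂μ, A₁ ω = -1 ∨ A₁ ω = 1) (hA₂ : ∀ᵐ ω ∂μ, A₂ ω = -1 ∨ A₂ ω = 1)
    (hB₁ : ∀ᵐ ω ∂μ, B₁ ω = -1 ∨ B₁ ω = 1) (hB₂ : ∀ᵐ ω ∂μ, B₂ ω = -1 ∨ B₂ ω = 1)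
    (hC₁ : ∀ᵐ ω ∂μ, C₁ ω = -1 ∨ C₁ ω = 1)
    (h1 : ∫ ω, A₁ ω * B₁ ω * C₁ ω ∂μ = -1)
    (h2 : ∫ ω, A₂ ω * B₂ ω * C₁ ω ∂μ = -1) :
    ∫ ω, A₁ ω * A₂ ω * B₁ ω * B₂ ω ∂μ = 1 := by
  have hC := ae_abs_eq_one hC₁
  have e1 := ae_mul_mul_eq_neg_one_of_integral_eq_neg_one
    (ae_abs_eq_one hA₁) (ae_abs_eq_one hB₁) hC h1
  have e2 := ae_mul_mul_eq_neg_one_of_integral_eq_neg_one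
    (ae_abs_eq_one hA₂) (ae_abs_eq_one hB₂) hC h2
  have key : ∀ᵐ ω ∂μ, A₁ ω * A₂ ω * B₁ ω * B₂ ω = 1 := by
    filter_upwards [e1, e2, hC] with ω e1 e2 hc
    have hc2 : C₁ ω ^ 2 = 1 := by rw [← sq_abs, hc, one_pow]
    linear_combination (A₂ ω * B₂ ω * C₁ ω) * e1 - e2 - A₁ ω * A₂ ω * B₁ ω * B₂ ω * hc2
  simp [integral_congr_ae key]

theorem stmt_13 {Ω : Type*} [MeasurableSpace Ω] (μ : Measure Ω) [IsProbabilityMeasure μ]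
    (A₁ A₂ B₁ B₂ C₁ : Ω → ℝ)
    (mA₁ : Measurable A₁) (mA₂ : Measurable A₂) (mB₁ : Measurable B₁)
    (mB₂ : Measurable B₂) (mC₁ : Measurable C₁)
    (hA₁ : ∀ᵐ ω ∂μ, A₁ ω = -1 ∨ A₁ ω = 1) (hA₂ : ∀ᵐ ω ∂μ, A₂ ω = -1 ∨ A₂ ω = 1)
    (hB₁ : ∀ᵐ ω ∂μ, B₁ ω = -1 ∨ B₁ ω = 1) (hB₂ : ∀ᵐ ω ∂μ, B₂ ω = -1 ∨ B₂ ω = 1)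
    (hC₁ : ∀ᵐ ω ∂μ, C₁ ω = -1 ∨ C₁ ω = 1)
    (h1 : ∫ ω, A₁ ω * B₁ ω * C₁ ω ∂μ = -1)
    (h2 : ∫ ω, A₂ ω * B₂ ω * C₁ ω ∂μ = -1) :
    ∫ ω, A₁ ω * A₂ ω * B₁ ω * B₂ ω ∂μ = 1 :=
  stmt_13_general μ A₁ A₂ B₁ B₂ C₁ hA₁ hA₂ hB₁ hB₂ hC₁ h1 h2
end

section
/- Let A₁, A₂, B₁, B₂, C₂ be random variables on a probability space, each taking values in {−1, 1} almost surely, with E[A₂B₁C₂] = −1 and E[A₁B₂C₂] = 1. Then E[A₁A₂B₁B₂] = −1. -/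
open MeasureTheory

lemma aux_int {Ω : Type*} [MeasurableSpace Ω] (μ : Measure Ω) [IsProbabilityMeasure μ]
    (f : Ω → ℝ) (mf : Measurable f) (hf : ∀ᵐ ω ∂μ, f ω = -1 ∨ f ω = 1) :
    Integrable f μ := by
  refine (integrable_const (1 : ℝ)).mono' mf.aestronglyMeasurable ?_
  filter_upwards [hf] with ω h
  rcases h with h | h <;> simp [h]

lemma aux_eq_one {Ω : Type*} [MeasurableSpace Ω] (μ : Measure Ω) [IsProbabilityMeasure μ]
    (f : Ω → ℝ) (mf : Measurable f) (hf : ∀ᵐ ω ∂μ, f ω = -1 ∨ f ω = 1)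
    (hint : ∫ ω, f ω ∂μ = 1) : ∀ᵐ ω ∂μ, f ω = 1 := by
  have hi : Integrable f μ := aux_int μ f mf hf
  have hg : Integrable (fun ω => 1 - f ω) μ := (integrable_const 1).sub hi
  have hnn : 0 ≤ᵐ[μ] fun ω => 1 - f ω := by
    filter_upwards [hf] with ω h
    rcases h with h | h <;> simp [h]
  have hz : ∫ ω, (1 - f ω) ∂μ = 0 := by
    rw [integral_sub (integrable_const 1) hi, hint]
    simp
  have := (integral_eq_zero_iff_of_nonneg_ae hnn hg).mp hz
  filter_upwards [this] with ω h
  have : 1 - f ω = 0 := h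
  linarith

theorem stmt_14 {Ω : Type*} [MeasurableSpace Ω] (μ : Measure Ω) [IsProbabilityMeasure μ]
    (A₁ A₂ B₁ B₂ C₂ : Ω → ℝ)
    (mA₁ : Measurable A₁) (mA₂ : Measurable A₂) (mB₁ : Measurable B₁)
    (mB₂ : Measurable B₂) (mC₂ : Measurable C₂)
    (hA₁ : ∀ᵐ ω ∂μ, A₁ ω = -1 ∨ A₁ ω = 1) (hA₂ : ∀ᵐ ω ∂μ, A₂ ω = -1 ∨ A₂ ω = 1)
    (hB₁ : ∀ᵐ ω ∂μ, B₁ ω = -1 ∨ B₁ ω = 1) (hB₂ : ∀ᵐ ω ∂μ, B₂ ω = -1 ∨ B₂ ω = 1)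
    (hC₂ : ∀ᵐ ω ∂μ, C₂ ω = -1 ∨ C₂ ω = 1)
    (h1 : ∫ ω, A₂ ω * B₁ ω * C₂ ω ∂μ = -1)
    (h2 : ∫ ω, A₁ ω * B₂ ω * C₂ ω ∂μ = 1) :
    ∫ ω, A₁ ω * A₂ ω * B₁ ω * B₂ ω ∂μ = -1 := by
  have pm : ∀ {x y z : ℝ}, (x = -1 ∨ x = 1) → (y = -1 ∨ y = 1) → (z = -1 ∨ z = 1) →
      (x * y * z = -1 ∨ x * y * z = 1) := by
    rintro x y z (rfl | rfl) (rfl | rfl) (rfl | rfl) <;> norm_num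
  -- f = A₁B₂C₂ equals 1 a.e.
  have hfae : ∀ᵐ ω ∂μ, A₁ ω * B₂ ω * C₂ ω = 1 :=
    aux_eq_one μ _ ((mA₁.mul mB₂).mul mC₂)
      (by filter_upwards [hA₁, hB₂, hC₂] with ω a b c using pm a b c) h2
  -- g = -(A₂B₁C₂) equals 1 a.e.
  have hgae : ∀ᵐ ω ∂μ, -(A₂ ω * B₁ ω * C₂ ω) = 1 := by
    refine aux_eq_one μ _ ((mA₂.mul mB₁).mul mC₂).neg ?_ ?_
    · filter_upwards [hA₂, hB₁, hC₂] with ω a b c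
      rcases pm a b c with h | h <;> simp [h]
    · have hi : Integrable (fun ω => A₂ ω * B₁ ω * C₂ ω) μ :=
        aux_int μ _ ((mA₂.mul mB₁).mul mC₂)
          (by filter_upwards [hA₂, hB₁, hC₂] with ω a b c using pm a b c)
      rw [integral_neg, h1]; norm_num
  have hprod : ∀ᵐ ω ∂μ, A₁ ω * A₂ ω * B₁ ω * B₂ ω = -1 := by
    filter_upwards [hfae, hgae, hC₂] with ω hf hg hc
    have hc2 : C₂ ω * C₂ ω = 1 := by rcases hc with h | h <;> simp [h]
    have key : (A₁ ω * A₂ ω * B₁ ω * B₂ ω) * (C₂ ω * C₂ ω)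
        = (A₁ ω * B₂ ω * C₂ ω) * (A₂ ω * B₁ ω * C₂ ω) := by ring
    have : A₂ ω * B₁ ω * C₂ ω = -1 := by linarith
    rw [hc2, hf, this] at key
    linarith
  calc ∫ ω, A₁ ω * A₂ ω * B₁ ω * B₂ ω ∂μ = ∫ _ω, (-1 : ℝ) ∂μ := integral_congr_ae hprod
    _ = -1 := by simp
end

section
/- There exists a probability space carrying random variables A₁, A₂, B₁, B₂, C₁, each taking values in {−1, 1} almost surely, such that: E[A₁] = E[A₂] = E[B₁] = E[B₂] = E[C₁] = 0; E[A_iB_j] = 0, E[A_iC₁] = 0 and E[B_iC₁] = 0 for all i, j ∈ {1,2}; E[A₁B₁C₁] = −1 and E[A₂B₂C₁] = −1; and E[A₁B₂C₁] = 0 and E[A₂B₁C₁] = 0. -/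
/-!
Take three independent fair ±1 coins `a, a', c` and put `A₁ = a`, `A₂ = a'`, `C₁ = c`,
`B₁ = -a c`, `B₂ = -a' c`. Each listed moment is then `±E[χ_S]` for a Walsh character
`χ_S = ∏_{i ∈ S} (coin i)`, because `χ_S χ_T = χ_{S ∆ T}` (the coins square to `1`), and
`E[χ_S] = ∏_{i ∈ S} E[coin i]` vanishes unless `S = ∅`. Only `A₁B₁C₁` and `A₂B₂C₁` reduce to
`S = ∅`, giving `-1`.
-/

open MeasureTheory Finset

def spin (b : Bool) : ℝ := if b then 1 else -1

lemma spin_mul_self (b : Bool) : spin b * spin b = 1 := by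
  cases b <;> norm_num [spin]

lemma spin_eq_neg_one_or_one (b : Bool) : spin b = -1 ∨ spin b = 1 := by
  cases b <;> simp [spin]

noncomputable def fairCoin : Measure Bool := (PMF.uniformOfFintype Bool).toMeasure

instance : IsProbabilityMeasure fairCoin := by
  unfold fairCoin; infer_instance

lemma integral_spin : ∫ b, spin b ∂fairCoin = 0 := by
  simp [fairCoin, PMF.integral_eq_sum, spin]

lemma neg_eq_neg_one_or_one {a : ℝ} (h : a = -1 ∨ a = 1) : -a = -1 ∨ -a = 1 :=
  h.symm.imp (by simp [·]) (by simp [·])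

section Walsh

variable {ι : Type*}

def walsh (S : Finset ι) (x : ι → Bool) : ℝ := ∏ i ∈ S, spin (x i)

lemma walsh_eq_neg_one_or_one (S : Finset ι) (x : ι → Bool) :
    walsh S x = -1 ∨ walsh S x = 1 := by
  induction S using Finset.cons_induction with
  | empty => simp [walsh]
  | cons i S hi ih =>
    rw [walsh, prod_cons, ← walsh]
    rcases spin_eq_neg_one_or_one (x i) with h | h <;> rcases ih with h' | h' <;>
      simp [h, h']

lemma measurable_walsh (S : Finset ι) : Measurable (walsh S) := by
  unfold walsh; fun_prop

variable [Fintype ι]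

noncomputable def coinFlips : Measure (ι → Bool) := Measure.pi fun _ => fairCoin

instance : IsProbabilityMeasure (coinFlips : Measure (ι → Bool)) := by
  unfold coinFlips; infer_instance

variable [DecidableEq ι]

lemma walsh_eq_prod_univ (S : Finset ι) (x : ι → Bool) :
    walsh S x = ∏ i, if i ∈ S then spin (x i) else 1 :=
  (Fintype.prod_ite_mem S _).symm

lemma walsh_mul_walsh (S T : Finset ι) (x : ι → Bool) :
    walsh S x * walsh T x = walsh (symmDiff S T) x := by
  simp only [walsh_eq_prod_univ, ← prod_mul_distrib, Finset.mem_symmDiff]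
  refine prod_congr rfl fun i _ => ?_
  by_cases hS : i ∈ S <;> by_cases hT : i ∈ T <;> simp [hS, hT, spin_mul_self]

lemma integral_walsh (S : Finset ι) :
    ∫ x, walsh S x ∂coinFlips = if S = ∅ then 1 else 0 := by
  simp only [walsh_eq_prod_univ, coinFlips]
  rw [integral_fintype_prod_eq_prod (fun i b => if i ∈ S then spin b else 1)]
  have integral_factor (i : ι) :
      ∫ b, (if i ∈ S then spin b else 1) ∂fairCoin = if i ∈ S then 0 else 1 := by
    split_ifs
    · exact integral_spin
    · simp only [integral_const, probReal_univ, smul_eq_mul, mul_one]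
  simp only [integral_factor, Fintype.prod_ite_mem, prod_const]
  split_ifs with hS
  · simp [hS]
  · exact zero_pow (card_ne_zero.mpr (nonempty_iff_ne_empty.mpr hS))

end Walsh

theorem stmt_15 :
    ∃ (Ω : Type) (_ : MeasurableSpace Ω) (μ : Measure Ω) (A₁ A₂ B₁ B₂ C₁ : Ω → ℝ),
      IsProbabilityMeasure μ ∧
      Measurable A₁ ∧ Measurable A₂ ∧ Measurable B₁ ∧ Measurable B₂ ∧ Measurable C₁ ∧
      (∀ᵐ ω ∂μ, A₁ ω = -1 ∨ A₁ ω = 1) ∧ (∀ᵐ ω ∂μ, A₂ ω = -1 ∨ A₂ ω = 1) ∧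
      (∀ᵐ ω ∂μ, B₁ ω = -1 ∨ B₁ ω = 1) ∧ (∀ᵐ ω ∂μ, B₂ ω = -1 ∨ B₂ ω = 1) ∧
      (∀ᵐ ω ∂μ, C₁ ω = -1 ∨ C₁ ω = 1) ∧
      (∫ ω, A₁ ω ∂μ = 0) ∧ (∫ ω, A₂ ω ∂μ = 0) ∧ (∫ ω, B₁ ω ∂μ = 0) ∧
      (∫ ω, B₂ ω ∂μ = 0) ∧ (∫ ω, C₁ ω ∂μ = 0) ∧
      (∫ ω, A₁ ω * B₁ ω ∂μ = 0) ∧ (∫ ω, A₁ ω * B₂ ω ∂μ = 0) ∧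
      (∫ ω, A₂ ω * B₁ ω ∂μ = 0) ∧ (∫ ω, A₂ ω * B₂ ω ∂μ = 0) ∧
      (∫ ω, A₁ ω * C₁ ω ∂μ = 0) ∧ (∫ ω, A₂ ω * C₁ ω ∂μ = 0) ∧
      (∫ ω, B₁ ω * C₁ ω ∂μ = 0) ∧ (∫ ω, B₂ ω * C₁ ω ∂μ = 0) ∧
      (∫ ω, A₁ ω * B₁ ω * C₁ ω ∂μ = -1) ∧ (∫ ω, A₂ ω * B₂ ω * C₁ ω ∂μ = -1) ∧
      (∫ ω, A₁ ω * B₂ ω * C₁ ω ∂μ = 0) ∧ (∫ ω, A₂ ω * B₁ ω * C₁ ω ∂μ = 0) := by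
  refine ⟨Fin 3 → Bool, inferInstance, coinFlips,
    walsh {0}, walsh {1}, -walsh {0, 2}, -walsh {1, 2}, walsh {2}, inferInstance,
    measurable_walsh _, measurable_walsh _, (measurable_walsh _).neg, (measurable_walsh _).neg,
    measurable_walsh _,
    ae_of_all _ (walsh_eq_neg_one_or_one _), ae_of_all _ (walsh_eq_neg_one_or_one _),
    ae_of_all _ fun _ => neg_eq_neg_one_or_one (walsh_eq_neg_one_or_one _ _),
    ae_of_all _ fun _ => neg_eq_neg_one_or_one (walsh_eq_neg_one_or_one _ _),
    ae_of_all _ (walsh_eq_neg_one_or_one _), ?_⟩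
  simp +decide only [Pi.neg_apply, mul_neg, neg_mul, walsh_mul_walsh, integral_neg, integral_walsh]
  norm_num
end

section
/- There exists a probability space carrying random variables A₁, A₂, B₁, B₂, C₂, each taking values in {−1, 1} almost surely, such that: E[A₁] = E[A₂] = E[B₁] = E[B₂] = E[C₂] = 0; E[A_iB_j] = 0, E[A_iC₂] = 0 and E[B_iC₂] = 0 for all i, j ∈ {1,2}; E[A₂B₁C₂] = −1 and E[A₁B₂C₂] = 1; and E[A₂B₂C₂] = 0 and E[A₁B₁C₂] = 0. -/
/-! Take three independent fair signs A₁, A₂, C₂ and put B₁ = −A₂C₂, B₂ = A₁C₂. Since every sign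
squares to one, A₂B₁C₂ ≡ −1 and A₁B₂C₂ ≡ 1. Every other listed observable is, up to sign, a product
in which some coin occurs an odd number of times; flipping that coin preserves the uniform measure
and negates the observable, so its mean vanishes. -/

open MeasureTheory

theorem Fintype.sum_eq_zero_of_comp_eq_neg {α : Type*} [Fintype α] (e : α ≃ α) {f : α → ℝ}
    (hf : ∀ x, f (e x) = -f x) : ∑ x, f x = 0 := by
  have h := e.sum_comp f
  simp only [hf, Finset.sum_neg_distrib] at h
  linarith

theorem PMF.integral_uniformOfFintype_eq_zero_of_comp_eq_neg {α : Type*} [Fintype α]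
    [Nonempty α] [MeasurableSpace α] [MeasurableSingletonClass α] (e : α ≃ α) {f : α → ℝ}
    (hf : ∀ x, f (e x) = -f x) : ∫ x, f x ∂(PMF.uniformOfFintype α).toMeasure = 0 := by
  simp only [PMF.integral_eq_sum, PMF.uniformOfFintype_apply, smul_eq_mul, ← Finset.mul_sum,
    Fintype.sum_eq_zero_of_comp_eq_neg e hf, mul_zero]

theorem ae_eq_neg_one_or_one_of_mul_self {α : Type*} [MeasurableSpace α] {ν : Measure α}
    {X : α → ℝ} (hX : ∀ x, X x * X x = 1) : ∀ᵐ x ∂ν, X x = -1 ∨ X x = 1 :=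
  .of_forall fun x => (mul_self_eq_one_iff.mp (hX x)).symm

namespace GHSZ

noncomputable def sgn (b : Bool) : ℝ := if b then 1 else -1

@[simp] theorem sgn_not (b : Bool) : sgn (!b) = -sgn b := by cases b <;> simp [sgn]

theorem sgn_mul_self (b : Bool) : sgn b * sgn b = 1 := by cases b <;> simp [sgn]

abbrev Ω := Bool × Bool × Bool

noncomputable def μ : Measure Ω := (PMF.uniformOfFintype Ω).toMeasure

instance : IsProbabilityMeasure μ := by unfold μ; infer_instance

def flip₁ : Ω ≃ Ω := Equiv.prodCongr Equiv.boolNot (Equiv.refl _)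
def flip₂ : Ω ≃ Ω := Equiv.prodCongr (Equiv.refl _) (Equiv.prodCongr Equiv.boolNot (Equiv.refl _))
def flip₃ : Ω ≃ Ω := Equiv.prodCongr (Equiv.refl _) (Equiv.prodCongr (Equiv.refl _) Equiv.boolNot)

noncomputable def A₁ (ω : Ω) : ℝ := sgn ω.1
noncomputable def A₂ (ω : Ω) : ℝ := sgn ω.2.1
noncomputable def C₂ (ω : Ω) : ℝ := sgn ω.2.2
noncomputable def B₁ (ω : Ω) : ℝ := -(A₂ ω * C₂ ω)
noncomputable def B₂ (ω : Ω) : ℝ := A₁ ω * C₂ ω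

theorem integral_eq_zero_of_odd {f : Ω → ℝ}
    (hf : (∀ ω, f (flip₁ ω) = -f ω) ∨ (∀ ω, f (flip₂ ω) = -f ω) ∨ (∀ ω, f (flip₃ ω) = -f ω)) :
    ∫ ω, f ω ∂μ = 0 := by
  rcases hf with h | h | h <;> exact PMF.integral_uniformOfFintype_eq_zero_of_comp_eq_neg _ h

theorem A₁_mul_self (ω : Ω) : A₁ ω * A₁ ω = 1 := sgn_mul_self _

theorem A₂_mul_self (ω : Ω) : A₂ ω * A₂ ω = 1 := sgn_mul_self _

theorem C₂_mul_self (ω : Ω) : C₂ ω * C₂ ω = 1 := sgn_mul_self _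

theorem B₁_mul_self (ω : Ω) : B₁ ω * B₁ ω = 1 := by
  rw [B₁, neg_mul_neg, mul_mul_mul_comm, A₂_mul_self, C₂_mul_self, one_mul]

theorem B₂_mul_self (ω : Ω) : B₂ ω * B₂ ω = 1 := by
  rw [B₂, mul_mul_mul_comm, A₁_mul_self, C₂_mul_self, one_mul]

theorem A₂_mul_B₁_mul_C₂ (ω : Ω) : A₂ ω * B₁ ω * C₂ ω = -1 := by
  rw [B₁]
  linear_combination (-(C₂ ω * C₂ ω)) * A₂_mul_self ω - C₂_mul_self ω

theorem A₁_mul_B₂_mul_C₂ (ω : Ω) : A₁ ω * B₂ ω * C₂ ω = 1 := by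
  rw [B₂]
  linear_combination (C₂ ω * C₂ ω) * A₁_mul_self ω + C₂_mul_self ω

end GHSZ

open GHSZ in
theorem stmt_16 :
    ∃ (Ω : Type) (_ : MeasurableSpace Ω) (μ : Measure Ω) (A₁ A₂ B₁ B₂ C₂ : Ω → ℝ),
      IsProbabilityMeasure μ ∧
      Measurable A₁ ∧ Measurable A₂ ∧ Measurable B₁ ∧ Measurable B₂ ∧ Measurable C₂ ∧
      (∀ᵐ ω ∂μ, A₁ ω = -1 ∨ A₁ ω = 1) ∧ (∀ᵐ ω ∂μ, A₂ ω = -1 ∨ A₂ ω = 1) ∧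
      (∀ᵐ ω ∂μ, B₁ ω = -1 ∨ B₁ ω = 1) ∧ (∀ᵐ ω ∂μ, B₂ ω = -1 ∨ B₂ ω = 1) ∧
      (∀ᵐ ω ∂μ, C₂ ω = -1 ∨ C₂ ω = 1) ∧
      (∫ ω, A₁ ω ∂μ = 0) ∧ (∫ ω, A₂ ω ∂μ = 0) ∧ (∫ ω, B₁ ω ∂μ = 0) ∧
      (∫ ω, B₂ ω ∂μ = 0) ∧ (∫ ω, C₂ ω ∂μ = 0) ∧
      (∫ ω, A₁ ω * B₁ ω ∂μ = 0) ∧ (∫ ω, A₁ ω * B₂ ω ∂μ = 0) ∧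
      (∫ ω, A₂ ω * B₁ ω ∂μ = 0) ∧ (∫ ω, A₂ ω * B₂ ω ∂μ = 0) ∧
      (∫ ω, A₁ ω * C₂ ω ∂μ = 0) ∧ (∫ ω, A₂ ω * C₂ ω ∂μ = 0) ∧
      (∫ ω, B₁ ω * C₂ ω ∂μ = 0) ∧ (∫ ω, B₂ ω * C₂ ω ∂μ = 0) ∧
      (∫ ω, A₂ ω * B₁ ω * C₂ ω ∂μ = -1) ∧ (∫ ω, A₁ ω * B₂ ω * C₂ ω ∂μ = 1) ∧
      (∫ ω, A₂ ω * B₂ ω * C₂ ω ∂μ = 0) ∧ (∫ ω, A₁ ω * B₁ ω * C₂ ω ∂μ = 0) := by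
  refine ⟨GHSZ.Ω, inferInstance, μ, A₁, A₂, B₁, B₂, C₂, inferInstance,
    measurable_of_finite _, measurable_of_finite _, measurable_of_finite _,
    measurable_of_finite _, measurable_of_finite _,
    ae_eq_neg_one_or_one_of_mul_self A₁_mul_self, ae_eq_neg_one_or_one_of_mul_self A₂_mul_self,
    ae_eq_neg_one_or_one_of_mul_self B₁_mul_self, ae_eq_neg_one_or_one_of_mul_self B₂_mul_self,
    ae_eq_neg_one_or_one_of_mul_self C₂_mul_self,
    ?_, ?_, ?_, ?_, ?_, ?_, ?_, ?_, ?_, ?_, ?_, ?_, ?_,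
    by simp [A₂_mul_B₁_mul_C₂], by simp [A₁_mul_B₂_mul_C₂], ?_, ?_⟩
  all_goals exact integral_eq_zero_of_odd (by simp [flip₁, flip₂, flip₃, A₁, A₂, B₁, B₂, C₂])
end

section
/- Let μ₁ be a probability measure on the space of functions ({A₁,A₂,B₁,B₂,C₁} → Bool) and μ₂ a probability measure on the space of functions ({A₁,A₂,B₁,B₂,C₂} → Bool), where A₁, A₂, B₁, B₂, C₁, C₂ are six distinct labels. Then there exists a probability measure μ on the space of functions ({A₁,A₂,B₁,B₂,C₁,C₂} → Bool) whose pushforwards under restriction to the two five-element label sets are μ₁ and μ₂ respectively, if and only if the pushforwards of μ₁ and μ₂ under restriction to {A₁,A₂,B₁,B₂} coincide. -/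
/-! Glue `μ₁` and `μ₂` by making them conditionally independent given their common restriction
`ν` to `{A₁, A₂, B₁, B₂}`: the coupling `∑ z, ν {z} • μ₁[|z] ⊗ μ₂[|z]` has marginals `μ₁` and
`μ₂` by the law of total probability, and it is carried by pairs of configurations that agree on
`{A₁, A₂, B₁, B₂}`. Since the two five-label sets meet exactly in `{A₁, A₂, B₁, B₂}`, such a pair
is the pair of restrictions of a single configuration on all six labels. -/

open MeasureTheory

namespace ProbabilityTheory

variable {Ω₀ Ω₁ Ω₂ : Type*} [MeasurableSpace Ω₀] [MeasurableSpace Ω₁] [MeasurableSpace Ω₂]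
  {p₁ : Ω₁ → Ω₀} {p₂ : Ω₂ → Ω₀} {μ₁ : Measure Ω₁} {μ₂ : Measure Ω₂}

variable (p₁ p₂ μ₁ μ₂) in
noncomputable def condIndepCoupling : Measure (Ω₁ × Ω₂) :=
  Measure.sum fun z : Ω₀ => μ₁ (p₁ ⁻¹' {z}) • (μ₁[|p₁ ⁻¹' {z}]).prod (μ₂[|p₂ ⁻¹' {z}])

lemma measure_mul_cond_univ {Ω : Type*} [MeasurableSpace Ω] (μ : Measure Ω) [IsFiniteMeasure μ]
    {s : Set Ω} (hs : MeasurableSet s) : μ s * μ[|s] Set.univ = μ s := by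
  rw [mul_comm, cond_mul_eq_inter hs, Set.inter_univ]

lemma measure_preimage_singleton_eq_of_map_eq [MeasurableSingletonClass Ω₀]
    (hp₁ : Measurable p₁) (hp₂ : Measurable p₂) (h : μ₁.map p₁ = μ₂.map p₂) (z : Ω₀) :
    μ₁ (p₁ ⁻¹' {z}) = μ₂ (p₂ ⁻¹' {z}) := by
  rw [← Measure.map_apply hp₁ (.singleton z), h, Measure.map_apply hp₂ (.singleton z)]

lemma ae_eq_condIndepCoupling [Countable Ω₀] [MeasurableSingletonClass Ω₀]
    (hp₁ : Measurable p₁) (hp₂ : Measurable p₂) :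
    ∀ᵐ q ∂condIndepCoupling p₁ p₂ μ₁ μ₂, p₁ q.1 = p₂ q.2 := by
  refine Measure.ae_sum_iff.2 fun z => Measure.ae_smul_measure ?_ _
  have hs₁ : ∀ᵐ x ∂μ₁[|p₁ ⁻¹' {z}], p₁ x = z := ae_cond_mem (hp₁ (.singleton z))
  have hs₂ : ∀ᵐ y ∂μ₂[|p₂ ⁻¹' {z}], p₂ y = z := ae_cond_mem (hp₂ (.singleton z))
  filter_upwards [Measure.quasiMeasurePreserving_fst.ae hs₁,
    Measure.quasiMeasurePreserving_snd.ae hs₂] with q hq₁ hq₂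
  exact hq₁.trans hq₂.symm

variable [Fintype Ω₀] [DiscreteMeasurableSpace Ω₀]

lemma map_fst_condIndepCoupling [IsFiniteMeasure μ₁] [IsFiniteMeasure μ₂]
    (hp₁ : Measurable p₁) (hp₂ : Measurable p₂) (h : μ₁.map p₁ = μ₂.map p₂) :
    (condIndepCoupling p₁ p₂ μ₁ μ₂).map Prod.fst = μ₁ := by
  have hfiber := measure_preimage_singleton_eq_of_map_eq hp₁ hp₂ h
  rw [condIndepCoupling, Measure.map_sum measurable_fst.aemeasurable]
  simp only [Measure.map_smul, Measure.map_fst_prod, smul_smul, hfiber,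
    measure_mul_cond_univ μ₂ (hp₂ (.singleton _))]
  simp only [← hfiber]
  rw [Measure.sum_fintype, sum_meas_smul_cond_fiber hp₁]

lemma map_snd_condIndepCoupling [IsFiniteMeasure μ₁] [IsFiniteMeasure μ₂]
    (hp₁ : Measurable p₁) (hp₂ : Measurable p₂) (h : μ₁.map p₁ = μ₂.map p₂) :
    (condIndepCoupling p₁ p₂ μ₁ μ₂).map Prod.snd = μ₂ := by
  rw [condIndepCoupling, Measure.map_sum measurable_snd.aemeasurable]
  simp only [Measure.map_smul, Measure.map_snd_prod, smul_smul,
    measure_mul_cond_univ μ₁ (hp₁ (.singleton _))]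
  simp only [measure_preimage_singleton_eq_of_map_eq hp₁ hp₂ h]
  rw [Measure.sum_fintype, sum_meas_smul_cond_fiber hp₂]

end ProbabilityTheory

section Configurations

open ProbabilityTheory

variable {α : Type*} {S₀ S₁ S₂ T : Finset α}

lemma measurable_restrictConfig (h : S₁ ⊆ T) : Measurable (restrictConfig h) :=
  measurable_pi_lambda _ fun _ => measurable_pi_apply _

variable [DecidableEq α]

def glueConfig (hT : T ⊆ S₁ ∪ S₂) (f : (↥S₁ → Bool) × (↥S₂ → Bool)) (x : ↥T) : Bool :=
  if hx : x.1 ∈ S₁ then f.1 ⟨x, hx⟩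
  else f.2 ⟨x, (Finset.mem_union.1 (hT x.2)).resolve_left hx⟩

lemma measurable_glueConfig (hT : T ⊆ S₁ ∪ S₂) : Measurable (glueConfig hT) :=
  measurable_pi_lambda _ fun x => by
    unfold glueConfig
    split_ifs <;> fun_prop

lemma restrictConfig_comp_glueConfig (h₁ : S₁ ⊆ T) (hT : T ⊆ S₁ ∪ S₂) :
    restrictConfig h₁ ∘ glueConfig hT = Prod.fst := by
  funext f x
  simp [restrictConfig, glueConfig]

lemma restrictConfig_glueConfig_right (h₂ : S₂ ⊆ T) (hT : T ⊆ S₁ ∪ S₂)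
    (h₀₁ : S₀ ⊆ S₁) (h₀₂ : S₀ ⊆ S₂) (h₀ : S₁ ∩ S₂ ⊆ S₀) (f : (↥S₁ → Bool) × (↥S₂ → Bool))
    (hf : restrictConfig h₀₁ f.1 = restrictConfig h₀₂ f.2) :
    restrictConfig h₂ (glueConfig hT f) = f.2 := by
  funext x
  by_cases hx : x.1 ∈ S₁
  · have hx₀ : x.1 ∈ S₀ := h₀ (Finset.mem_inter.2 ⟨hx, x.2⟩)
    simpa [restrictConfig, glueConfig, hx] using congrFun hf ⟨x, hx₀⟩
  · simp [restrictConfig, glueConfig, hx]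

theorem exists_map_restrictConfig_eq_iff (h₁ : S₁ ⊆ T) (h₂ : S₂ ⊆ T) (h₀₁ : S₀ ⊆ S₁)
    (h₀₂ : S₀ ⊆ S₂) (hT : T ⊆ S₁ ∪ S₂) (h₀ : S₁ ∩ S₂ ⊆ S₀)
    (μ₁ : Measure (↥S₁ → Bool)) (μ₂ : Measure (↥S₂ → Bool))
    [IsProbabilityMeasure μ₁] [IsProbabilityMeasure μ₂] :
    (∃ μ : Measure (↥T → Bool), IsProbabilityMeasure μ ∧
      μ.map (restrictConfig h₁) = μ₁ ∧ μ.map (restrictConfig h₂) = μ₂) ↔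
    μ₁.map (restrictConfig h₀₁) = μ₂.map (restrictConfig h₀₂) := by
  have hr₁ := measurable_restrictConfig h₁
  have hr₂ := measurable_restrictConfig h₂
  have hp₁ := measurable_restrictConfig h₀₁
  have hp₂ := measurable_restrictConfig h₀₂
  constructor
  · rintro ⟨μ, -, rfl, rfl⟩
    rw [Measure.map_map hp₁ hr₁, Measure.map_map hp₂ hr₂]
    rfl
  · intro h
    set π := condIndepCoupling (restrictConfig h₀₁) (restrictConfig h₀₂) μ₁ μ₂
    have hg := measurable_glueConfig hT
    have hπ₂ : restrictConfig h₂ ∘ glueConfig hT =ᵐ[π] Prod.snd := by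
      filter_upwards [ae_eq_condIndepCoupling hp₁ hp₂] with f hf
      exact restrictConfig_glueConfig_right h₂ hT h₀₁ h₀₂ h₀ f hf
    have hμ₁ : (π.map (glueConfig hT)).map (restrictConfig h₁) = μ₁ := by
      rw [Measure.map_map hr₁ hg, restrictConfig_comp_glueConfig h₁ hT]
      exact map_fst_condIndepCoupling hp₁ hp₂ h
    have hμ₂ : (π.map (glueConfig hT)).map (restrictConfig h₂) = μ₂ := by
      rw [Measure.map_map hr₂ hg, Measure.map_congr hπ₂]
      exact map_snd_condIndepCoupling hp₁ hp₂ h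
    refine ⟨π.map (glueConfig hT), ?_, hμ₁, hμ₂⟩
    have : IsProbabilityMeasure ((π.map (glueConfig hT)).map (restrictConfig h₁)) := by
      rw [hμ₁]
      infer_instance
    exact Measure.isProbabilityMeasure_of_map (restrictConfig h₁)

end Configurations

theorem stmt_18 {α : Type*} [DecidableEq α] (A₁ A₂ B₁ B₂ C₁ C₂ : α)
    (hd : A₁ ≠ A₂ ∧ A₁ ≠ B₁ ∧ A₁ ≠ B₂ ∧ A₁ ≠ C₁ ∧ A₁ ≠ C₂ ∧
          A₂ ≠ B₁ ∧ A₂ ≠ B₂ ∧ A₂ ≠ C₁ ∧ A₂ ≠ C₂ ∧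
          B₁ ≠ B₂ ∧ B₁ ≠ C₁ ∧ B₁ ≠ C₂ ∧ B₂ ≠ C₁ ∧ B₂ ≠ C₂ ∧ C₁ ≠ C₂)
    (μ₁ : Measure (↥({A₁, A₂, B₁, B₂, C₁} : Finset α) → Bool))
    (μ₂ : Measure (↥({A₁, A₂, B₁, B₂, C₂} : Finset α) → Bool))
    [IsProbabilityMeasure μ₁] [IsProbabilityMeasure μ₂] :
    (∃ μ : Measure (↥({A₁, A₂, B₁, B₂, C₁, C₂} : Finset α) → Bool), IsProbabilityMeasure μ ∧
      μ.map (restrictConfig (S := {A₁, A₂, B₁, B₂, C₁})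
        (by intro x hx; simp only [Finset.mem_insert, Finset.mem_singleton] at hx ⊢; tauto)) = μ₁ ∧
      μ.map (restrictConfig (S := {A₁, A₂, B₁, B₂, C₂})
        (by intro x hx; simp only [Finset.mem_insert, Finset.mem_singleton] at hx ⊢; tauto)) = μ₂)
    ↔
    μ₁.map (restrictConfig (S := {A₁, A₂, B₁, B₂})
        (by intro x hx; simp only [Finset.mem_insert, Finset.mem_singleton] at hx ⊢; tauto)) =
    μ₂.map (restrictConfig (S := {A₁, A₂, B₁, B₂})
        (by intro x hx; simp only [Finset.mem_insert, Finset.mem_singleton] at hx ⊢; tauto)) := by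
  obtain ⟨-, -, -, -, -, -, -, -, -, -, -, -, -, -, hC⟩ := hd
  refine exists_map_restrictConfig_eq_iff _ _ _ _ ?_ ?_ μ₁ μ₂
  · intro x hx
    simp only [Finset.mem_union, Finset.mem_insert, Finset.mem_singleton] at hx ⊢
    tauto
  · intro x hx
    simp only [Finset.mem_inter, Finset.mem_insert, Finset.mem_singleton] at hx ⊢
    rcases hx with ⟨hx₁ | hx₁ | hx₁ | hx₁ | rfl, hx₂ | hx₂ | hx₂ | hx₂ | hx₂⟩ <;> tauto
end
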